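/- arXiv:1702.01988 — 3 statements merged into one kernel-verified Lean document; each statement's English description precedes it below -/
import Mathlib

section
/- Let F̂ ∈ L¹_loc(ℝ²) and suppose A := ‖(1+|ξ|)F̂‖_{L²(ℝ²)} < ∞ and B := ‖(1+|ξ|²)F̂‖_{L²(ℝ²)} < ∞. Then for every R ≥ 0, ∫_{ℝ²}|F̂(ξ)|dξ ≤ C A (ln(e+R))^{1/2} + C B/(1+R), for an absolute constant C. -/
/-!
Split the frequency plane at `‖ξ‖ = R`. On each piece write `|F̂| = w⁻¹ · (w |F̂|)` with
`w = 1 + |ξ|` on the disc and `w = 1 + |ξ|²` outside it, and apply Cauchy–Schwarz. In polar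
coordinates `∫_{|ξ|<R} (1 + |ξ|)⁻² = 2π ∫₀^R r (1 + r)⁻² dr ≤ 2π log (1 + R)`, while
`∫_{|ξ|≥R} (1 + |ξ|²)⁻² = π / (1 + R²) ≤ 2π / (1 + R)²`, so `C = √(2π)` works.
-/

open Real MeasureTheory Set Metric Filter
open scoped ENNReal

local notation "ℝ²" => EuclideanSpace ℝ (Fin 2)

section WeightedCauchySchwarz

variable {α : Type*} [MeasurableSpace α] {μ : Measure α}

theorem eLpNorm_two_le_ofReal_sqrt {g : α → ℝ} {c : ℝ}
    (h : ∫⁻ x, ENNReal.ofReal (g x ^ 2) ∂μ ≤ ENNReal.ofReal c) :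
    eLpNorm g 2 μ ≤ ENNReal.ofReal √c := by
  have hsq (x : α) : ‖g x‖ₑ ^ (2 : ℝ) = ENNReal.ofReal (g x ^ 2) := by
    rw [Real.enorm_eq_ofReal_abs, ENNReal.rpow_ofNat, ← ENNReal.ofReal_pow (abs_nonneg _),
      sq_abs]
  rw [eLpNorm_eq_lintegral_rpow_enorm_toReal two_ne_zero ENNReal.ofNat_ne_top,
    ENNReal.toReal_ofNat]
  simp_rw [hsq]
  calc (∫⁻ x, ENNReal.ofReal (g x ^ 2) ∂μ) ^ (1 / 2 : ℝ) ≤ ENNReal.ofReal c ^ (1 / 2 : ℝ) := by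
        gcongr
    _ ≤ ENNReal.ofReal √c := by
        rcases le_total 0 c with hc | hc
        · rw [sqrt_eq_rpow, ENNReal.ofReal_rpow_of_nonneg hc (by norm_num)]
        · simp [ENNReal.ofReal_of_nonpos hc]

variable {f w : α → ℝ}

theorem setLIntegral_enorm_le_eLpNorm_mul_eLpNorm_inv (hf : AEStronglyMeasurable f μ)
    (hw : Measurable w) (hw0 : ∀ x, w x ≠ 0) (s : Set α) :
    ∫⁻ x in s, ‖f x‖ₑ ∂μ ≤
      eLpNorm (fun x ↦ w x * f x) 2 μ * eLpNorm (fun x ↦ (w x)⁻¹) 2 (μ.restrict s) := by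
  calc ∫⁻ x in s, ‖f x‖ₑ ∂μ = eLpNorm (fun x ↦ (w x)⁻¹ * (w x * f x)) 1 (μ.restrict s) := by
        simp only [eLpNorm_one_eq_lintegral_enorm, inv_mul_cancel_left₀ (hw0 _)]
    _ ≤ 1 * eLpNorm (fun x ↦ (w x)⁻¹) 2 (μ.restrict s) *
          eLpNorm (fun x ↦ w x * f x) 2 (μ.restrict s) :=
        eLpNorm_le_eLpNorm_mul_eLpNorm'_of_norm hw.inv.aestronglyMeasurable
          (hw.aestronglyMeasurable.mul hf).restrict (· * ·) 1
          (.of_forall fun x ↦ by simp [norm_mul])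
    _ ≤ _ := by
        rw [one_mul, mul_comm]
        gcongr
        exact Measure.restrict_le_self

theorem setLIntegral_enorm_le_of_lintegral_inv_sq_le (hf : AEStronglyMeasurable f μ)
    (hw : Measurable w) (hw0 : ∀ x, w x ≠ 0) (hwf : MemLp (fun x ↦ w x * f x) 2 μ)
    {s : Set α} {c : ℝ} (hc : ∫⁻ x in s, ENNReal.ofReal ((w x)⁻¹ ^ 2) ∂μ ≤ ENNReal.ofReal c) :
    ∫⁻ x in s, ‖f x‖ₑ ∂μ ≤
      ENNReal.ofReal ((eLpNorm (fun x ↦ w x * f x) 2 μ).toReal * √c) := by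
  calc ∫⁻ x in s, ‖f x‖ₑ ∂μ
      ≤ eLpNorm (fun x ↦ w x * f x) 2 μ * eLpNorm (fun x ↦ (w x)⁻¹) 2 (μ.restrict s) :=
        setLIntegral_enorm_le_eLpNorm_mul_eLpNorm_inv hf hw hw0 s
    _ ≤ ENNReal.ofReal (eLpNorm (fun x ↦ w x * f x) 2 μ).toReal * ENNReal.ofReal √c := by
        rw [ENNReal.ofReal_toReal hwf.eLpNorm_ne_top]
        gcongr
        exact eLpNorm_two_le_ofReal_sqrt hc
    _ = _ := (ENNReal.ofReal_mul ENNReal.toReal_nonneg).symm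

end WeightedCauchySchwarz

theorem MeasureTheory.lintegral_fun_norm_addHaar {E : Type*} [NormedAddCommGroup E]
    [NormedSpace ℝ E] [Nontrivial E] [FiniteDimensional ℝ E] [MeasurableSpace E] [BorelSpace E]
    (μ : Measure E) [μ.IsAddHaarMeasure] {f : ℝ → ℝ≥0∞} (hf : Measurable f) :
    ∫⁻ x, f ‖x‖ ∂μ = Module.finrank ℝ E * μ (ball 0 1) *
      ∫⁻ y in Ioi (0 : ℝ), ENNReal.ofReal (y ^ (Module.finrank ℝ E - 1)) * f y := by
  calc ∫⁻ x, f ‖x‖ ∂μ = ∫⁻ x : ({(0 : E)}ᶜ : Set E), f ‖x.1‖ ∂(μ.comap (↑)) := by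
        rw [lintegral_subtype_comap (measurableSet_singleton _).compl (fun x : E ↦ f ‖x‖),
          restrict_compl_singleton]
    _ = ∫⁻ p, f p.2 ∂(μ.toSphere.prod (Measure.volumeIoiPow (Module.finrank ℝ E - 1))) := by
        simpa using μ.measurePreserving_homeomorphUnitSphereProd.lintegral_comp_emb
          (Homeomorph.measurableEmbedding _) (f ∘ Subtype.val ∘ Prod.snd)
    _ = μ.toSphere univ * ∫⁻ y, f y ∂(Measure.volumeIoiPow (Module.finrank ℝ E - 1)) := by
        simpa using lintegral_prod_mul (μ := μ.toSphere) (f := fun _ ↦ (1 : ℝ≥0∞))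
          (g := fun y : Ioi (0 : ℝ) ↦ f y) aemeasurable_const (by fun_prop)
    _ = _ := by
        rw [Measure.toSphere_apply_univ, Measure.volumeIoiPow,
          lintegral_withDensity_eq_lintegral_mul₀ (by fun_prop) (by fun_prop),
          ← lintegral_subtype_comap measurableSet_Ioi]
        rfl

theorem EuclideanSpace.setLIntegral_norm_preimage_fin_two {f : ℝ → ℝ≥0∞} (hf : Measurable f)
    {I : Set ℝ} (hI : MeasurableSet I) :
    ∫⁻ x : ℝ² in (‖·‖) ⁻¹' I, f ‖x‖ =
      2 * ENNReal.ofReal π * ∫⁻ y in Ioi 0 ∩ I, ENNReal.ofReal y * f y := by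
  have hmul : (fun y ↦ ENNReal.ofReal y * I.indicator f y) =
      I.indicator (fun y ↦ ENNReal.ofReal y * f y) := by
    ext y; by_cases hy : y ∈ I <;> simp [hy]
  have := lintegral_fun_norm_addHaar (volume : Measure ℝ²) (hf.indicator hI)
  simp only [finrank_euclideanSpace_fin, EuclideanSpace.volume_ball_fin_two] at this
  rw [← lintegral_indicator (measurable_norm hI)]
  refine this.trans ?_
  simp [hmul, setLIntegral_indicator hI, inter_comm]

theorem integral_Ioo_inv_one_add {R : ℝ} (hR : 0 ≤ R) :
    ∫ y in Ioo 0 R, (1 + y)⁻¹ = log (1 + R) := by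
  rw [← integral_Ioc_eq_integral_Ioo, ← intervalIntegral.integral_of_le hR,
    intervalIntegral.integral_comp_add_left (fun y ↦ y⁻¹), add_zero,
    integral_inv_of_pos one_pos (by linarith)]
  simp

theorem hasDerivAt_neg_inv_two_mul_one_add_sq (y : ℝ) :
    HasDerivAt (fun y ↦ -(2 * (1 + y ^ 2))⁻¹) (y * ((1 + y ^ 2)⁻¹) ^ 2) y := by
  have h := (((hasDerivAt_pow 2 y).const_add 1).const_mul 2).inv (by positivity)
  refine h.neg.congr_deriv ?_
  field_simp
  ring

theorem tendsto_neg_inv_two_mul_one_add_sq :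
    Tendsto (fun y : ℝ ↦ -(2 * (1 + y ^ 2))⁻¹) atTop (nhds 0) := by
  have h : Tendsto (fun y : ℝ ↦ 2 * (1 + y ^ 2)) atTop atTop :=
    (tendsto_atTop_add_const_left _ 1 (tendsto_pow_atTop two_ne_zero)).const_mul_atTop two_pos
  simpa using h.inv_tendsto_atTop.neg

theorem lintegral_Ioi_mul_inv_one_add_sq_sq {R : ℝ} (hR : 0 ≤ R) :
    ∫⁻ y in Ioi R, ENNReal.ofReal (y * ((1 + y ^ 2)⁻¹) ^ 2) =
      ENNReal.ofReal (2 * (1 + R ^ 2))⁻¹ := by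
  have hderiv (y : ℝ) (_ : y ∈ Ici R) := hasDerivAt_neg_inv_two_mul_one_add_sq y
  have hnonneg (y : ℝ) (hy : y ∈ Ioi R) : 0 ≤ y * ((1 + y ^ 2)⁻¹) ^ 2 := by
    have : 0 < y := hR.trans_lt hy
    positivity
  rw [← ofReal_integral_eq_lintegral_ofReal
      (integrableOn_Ioi_deriv_of_nonneg' hderiv hnonneg tendsto_neg_inv_two_mul_one_add_sq)
      (ae_restrict_of_forall_mem measurableSet_Ioi hnonneg),
    integral_Ioi_of_hasDerivAt_of_nonneg' hderiv hnonneg tendsto_neg_inv_two_mul_one_add_sq,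
    zero_sub, neg_neg]

theorem lintegral_ball_inv_one_add_norm_sq_le {R : ℝ} (hR : 0 ≤ R) :
    ∫⁻ x : ℝ² in ball 0 R, ENNReal.ofReal ((1 + ‖x‖)⁻¹ ^ 2) ≤
      ENNReal.ofReal (2 * π * log (1 + R)) := by
  have hball : ball (0 : ℝ²) R = (‖·‖) ⁻¹' Iio R := by ext; simp
  rw [hball, EuclideanSpace.setLIntegral_norm_preimage_fin_two
      (f := fun r ↦ ENNReal.ofReal ((1 + r)⁻¹ ^ 2)) (by fun_prop) measurableSet_Iio,
    Ioi_inter_Iio, ENNReal.ofReal_mul (by positivity), ENNReal.ofReal_mul (by positivity),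
    ENNReal.ofReal_ofNat]
  gcongr
  calc ∫⁻ y in Ioo 0 R, ENNReal.ofReal y * ENNReal.ofReal ((1 + y)⁻¹ ^ 2)
      ≤ ∫⁻ y in Ioo 0 R, ENNReal.ofReal (1 + y)⁻¹ := by
        refine setLIntegral_mono (by fun_prop) fun y hy ↦ ?_
        have hy0 : 0 < y := hy.1
        have hy1 : y * (1 + y)⁻¹ ≤ 1 := by
          rw [← div_eq_mul_inv, div_le_one (by positivity)]
          linarith
        rw [← ENNReal.ofReal_mul hy0.le]
        gcongr
        calc y * (1 + y)⁻¹ ^ 2 = y * (1 + y)⁻¹ * (1 + y)⁻¹ := by ring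
          _ ≤ (1 + y)⁻¹ := mul_le_of_le_one_left (by positivity) hy1
    _ = ENNReal.ofReal (log (1 + R)) := by
        rw [← integral_Ioo_inv_one_add hR, ofReal_integral_eq_lintegral_ofReal]
        · refine (ContinuousOn.integrableOn_Icc ?_).mono_set Ioo_subset_Icc_self
          exact ContinuousOn.inv₀ (by fun_prop) fun y hy ↦ by linarith [hy.1]
        · exact ae_restrict_of_forall_mem measurableSet_Ioo fun y hy ↦ by
            have := hy.1
            positivity

theorem lintegral_compl_ball_inv_one_add_norm_sq_sq_le {R : ℝ} (hR : 0 ≤ R) :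
    ∫⁻ x : ℝ² in (ball 0 R)ᶜ, ENNReal.ofReal ((1 + ‖x‖ ^ 2)⁻¹ ^ 2) ≤
      ENNReal.ofReal (π / (1 + R ^ 2)) := by
  have hball : (ball (0 : ℝ²) R)ᶜ = (‖·‖) ⁻¹' Ici R := by ext; simp
  have hmul (y : ℝ) : ENNReal.ofReal y * ENNReal.ofReal ((1 + y ^ 2)⁻¹ ^ 2) =
      ENNReal.ofReal (y * (1 + y ^ 2)⁻¹ ^ 2) := (ENNReal.ofReal_mul' (by positivity)).symm
  rw [hball, EuclideanSpace.setLIntegral_norm_preimage_fin_two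
    (f := fun r ↦ ENNReal.ofReal ((1 + r ^ 2)⁻¹ ^ 2)) (by fun_prop) measurableSet_Ici]
  simp_rw [hmul]
  calc 2 * ENNReal.ofReal π * ∫⁻ y in Ioi 0 ∩ Ici R, ENNReal.ofReal (y * (1 + y ^ 2)⁻¹ ^ 2)
      ≤ 2 * ENNReal.ofReal π * ∫⁻ y in Ioi R, ENNReal.ofReal (y * (1 + y ^ 2)⁻¹ ^ 2) := by
        rw [setLIntegral_congr Ioi_ae_eq_Ici]
        gcongr
        exact inter_subset_right
    _ = ENNReal.ofReal (π / (1 + R ^ 2)) := by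
        rw [lintegral_Ioi_mul_inv_one_add_sq_sq hR, ← ENNReal.ofReal_ofNat 2,
          ← ENNReal.ofReal_mul zero_le_two, ← ENNReal.ofReal_mul (by positivity)]
        congr 1
        field_simp

theorem sqrt_two_pi_mul_log_one_add_le {R : ℝ} (hR : 0 ≤ R) :
    √(2 * π * log (1 + R)) ≤ √(2 * π) * √(log (exp 1 + R)) := by
  rw [← sqrt_mul (by positivity)]
  gcongr
  linarith [add_one_le_exp (1 : ℝ)]

theorem sqrt_pi_div_one_add_sq_le {R : ℝ} (hR : 0 ≤ R) :
    √(π / (1 + R ^ 2)) ≤ √(2 * π) / (1 + R) := by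
  rw [← sqrt_sq (by positivity : 0 ≤ 1 + R), ← sqrt_div' _ (by positivity)]
  apply sqrt_le_sqrt
  rw [div_le_div_iff₀ (by positivity) (by positivity)]
  nlinarith [pi_pos, sq_nonneg (1 - R)]

/-- Splitting estimate in the proof of the Brezis–Gallouet inequality: if
`F̂ ∈ L¹_loc(ℝ²)` with `A = ‖(1+|ξ|)F̂‖_{L²} < ∞` and `B = ‖(1+|ξ|²)F̂‖_{L²} < ∞`,
then for every `R ≥ 0`,
`∫ |F̂| ≤ C A (ln(e+R))^{1/2} + C B/(1+R)` for an absolute constant `C`. -/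
theorem fourier_splitting_estimate :
    ∃ C : ℝ, 0 < C ∧
      ∀ (F : EuclideanSpace ℝ (Fin 2) → ℂ) (A B : ℝ),
        LocallyIntegrable F volume →
        MemLp (fun ξ => (1 + ‖ξ‖) * ‖F ξ‖) 2 volume →
        MemLp (fun ξ => (1 + ‖ξ‖ ^ 2) * ‖F ξ‖) 2 volume →
        A = (eLpNorm (fun ξ => (1 + ‖ξ‖) * ‖F ξ‖) 2 volume).toReal →
        B = (eLpNorm (fun ξ => (1 + ‖ξ‖ ^ 2) * ‖F ξ‖) 2 volume).toReal →
        ∀ R : ℝ, 0 ≤ R →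
          (∫⁻ ξ, ‖F ξ‖₊ ∂volume) ≤
            ENNReal.ofReal (C * A * Real.sqrt (Real.log (Real.exp 1 + R))
              + C * B / (1 + R)) := by
  refine ⟨√(2 * π), by positivity, ?_⟩
  rintro F A B hF hA hB rfl rfl R hR
  have hf : AEStronglyMeasurable (fun ξ ↦ ‖F ξ‖) volume := hF.aestronglyMeasurable.norm
  have hlow := setLIntegral_enorm_le_of_lintegral_inv_sq_le hf (by fun_prop)
    (fun ξ ↦ by positivity) hA (lintegral_ball_inv_one_add_norm_sq_le hR)
  have hhigh := setLIntegral_enorm_le_of_lintegral_inv_sq_le hf (by fun_prop)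
    (fun ξ ↦ by positivity) hB (lintegral_compl_ball_inv_one_add_norm_sq_sq_le hR)
  calc ∫⁻ ξ, ‖F ξ‖₊ = ∫⁻ ξ, ‖‖F ξ‖‖ₑ := by simp [enorm_eq_nnnorm]
    _ = _ := (lintegral_add_compl _ measurableSet_ball).symm
    _ ≤ _ := add_le_add hlow hhigh
    _ ≤ _ := by
        rw [← ENNReal.ofReal_add (by positivity) (by positivity)]
        refine ENNReal.ofReal_le_ofReal (add_le_add ?_ ?_)
        · grw [sqrt_two_pi_mul_log_one_add_le hR]
          exact le_of_eq (by ring)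
        · grw [sqrt_pi_div_one_add_sq_le hR]
          exact le_of_eq (by ring)
end

section
/- Let X, Y : [0,T] → [0,∞) with X continuous, X differentiable, Y integrable, c₀ > 0, and suppose X'(t) + (1 − c₀ X(t)²) Y(t) ≤ 0 for a.e. t. If c₀ X(0)² < δ for some δ ∈ (0,1), then c₀ X(t)² < δ for all t ∈ [0,T], and moreover X(t) + (1−δ)∫₀ᵗ Y(s) ds ≤ X(0) for all t ∈ [0,T]. -/
open Real Set MeasureTheory intervalIntegral

/-- Key step: if `c₀ X² ≤ δ` on `(0,b)`, the differential inequality integrates to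
`X b + (1-δ) ∫₀ᵇ Y ≤ X 0`. -/
theorem absorption_key (T : ℝ) (c₀ δ : ℝ)
    (hδ : δ ∈ Ioo (0:ℝ) 1)
    (X Y : ℝ → ℝ)
    (hXcont : ContinuousOn X (Icc 0 T))
    (hXdiff : ∀ t ∈ Icc 0 T, DifferentiableAt ℝ X t)
    (hYint : IntegrableOn Y (Icc 0 T))
    (hYnonneg : ∀ t ∈ Icc 0 T, 0 ≤ Y t)
    (hineq : ∀ᵐ t ∂(volume.restrict (Icc 0 T)),
      deriv X t + (1 - c₀ * X t ^ 2) * Y t ≤ 0)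
    (b : ℝ) (hb : b ∈ Icc 0 T)
    (hsmall : ∀ s ∈ Ioo 0 b, c₀ * X s ^ 2 ≤ δ) :
    X b + (1 - δ) * ∫ s in (0:ℝ)..b, Y s ≤ X 0 := by
  set φ : ℝ → ℝ := fun x => max (deriv X x) (-((1 - δ) * Y x)) with hφ
  have hsub : Icc (0:ℝ) b ⊆ Icc 0 T := Icc_subset_Icc le_rfl hb.2
  have hineq' : ∀ᵐ t ∂(volume.restrict (Ioo 0 b)),
      deriv X t + (1 - c₀ * X t ^ 2) * Y t ≤ 0 := by
    refine ae_mono (Measure.restrict_mono (Ioo_subset_Icc_self.trans hsub) le_rfl) hineq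
  have hmem : ∀ᵐ t ∂(volume.restrict (Ioo 0 b)), t ∈ Ioo 0 b :=
    ae_restrict_mem measurableSet_Ioo
  have heq : ∀ᵐ t ∂(volume.restrict (Ioo 0 b)), φ t = -((1 - δ) * Y t) := by
    filter_upwards [hineq', hmem] with t ht htmem
    have hYt : 0 ≤ Y t := hYnonneg t (hsub (Ioo_subset_Icc_self htmem))
    have h1 : deriv X t ≤ -((1 - c₀ * X t ^ 2) * Y t) := by linarith
    have h2 : (1 - δ) * Y t ≤ (1 - c₀ * X t ^ 2) * Y t := by
      have := hsmall t htmem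
      nlinarith
    exact max_eq_right (by linarith)
  have heqIcc : ∀ᵐ t ∂(volume.restrict (Icc 0 b)), φ t = -((1 - δ) * Y t) := by
    rwa [← Measure.restrict_congr_set Ioo_ae_eq_Icc]
  have hYint' : IntegrableOn (fun x => -((1 - δ) * Y x)) (Icc 0 b) :=
    ((hYint.mono_set hsub).const_mul (1 - δ)).neg
  have heqE : (fun x => -((1 - δ) * Y x)) =ᵐ[volume.restrict (Icc 0 b)] φ :=
    Filter.EventuallyEq.symm heqIcc
  have φint : IntegrableOn φ (Icc 0 b) := hYint'.congr heqE
  have hder : ∀ x ∈ Ioo 0 b, HasDerivWithinAt X (deriv X x) (Ioi x) x := fun x hx =>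
    ((hXdiff x (hsub (Ioo_subset_Icc_self hx))).hasDerivAt).hasDerivWithinAt
  have key := sub_le_integral_of_hasDeriv_right_of_le hb.1 (hXcont.mono hsub) hder φint
    (fun x _ => le_max_left _ _)
  have hintcong : (∫ y in (0:ℝ)..b, φ y) = ∫ y in (0:ℝ)..b, -((1 - δ) * Y y) := by
    refine intervalIntegral.integral_congr_ae' ?_ ?_
    · have := (ae_restrict_iff' measurableSet_Icc).mp heqIcc
      filter_upwards [this] with x hx hx'
      exact hx (Ioc_subset_Icc_self hx')
    · exact Filter.Eventually.of_forall fun x hx =>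
        absurd hx.1 (not_lt.mpr (hx.2.trans hb.1))
  rw [hintcong] at key
  rw [intervalIntegral.integral_neg, intervalIntegral.integral_const_mul] at key
  linarith

/-- Continuation/absorption argument: if `X' + (1 − c₀ X²) Y ≤ 0` a.e. on `[0,T]`,
`X, Y ≥ 0`, `Y` integrable, and `c₀ X(0)² < δ` with `δ ∈ (0,1)`, then `c₀ X(t)² < δ`
on `[0,T]` and `X(t) + (1−δ)∫₀ᵗ Y ≤ X(0)`. -/
theorem absorption_argument (T : ℝ) (hT : 0 < T) (c₀ δ : ℝ) (hc₀ : 0 < c₀)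
    (hδ : δ ∈ Ioo (0:ℝ) 1)
    (X Y : ℝ → ℝ)
    (hXcont : ContinuousOn X (Icc 0 T))
    (hXdiff : ∀ t ∈ Icc 0 T, DifferentiableAt ℝ X t)
    (hYint : IntegrableOn Y (Icc 0 T))
    (hXnonneg : ∀ t ∈ Icc 0 T, 0 ≤ X t)
    (hYnonneg : ∀ t ∈ Icc 0 T, 0 ≤ Y t)
    (hineq : ∀ᵐ t ∂(volume.restrict (Icc 0 T)),
      deriv X t + (1 - c₀ * X t ^ 2) * Y t ≤ 0)
    (h0 : c₀ * X 0 ^ 2 < δ) :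
    ∀ t ∈ Icc 0 T,
      c₀ * X t ^ 2 < δ ∧ X t + (1 - δ) * ∫ s in (0:ℝ)..t, Y s ≤ X 0 := by
  have hYnn : ∀ b ∈ Icc (0:ℝ) T, 0 ≤ ∫ s in (0:ℝ)..b, Y s := by
    intro b hb
    apply intervalIntegral.integral_nonneg hb.1
    intro u hu
    exact hYnonneg u ⟨hu.1, hu.2.trans hb.2⟩
  -- First claim: `c₀ X t ^ 2 < δ` everywhere on `[0,T]`.
  have main : ∀ t ∈ Icc 0 T, c₀ * X t ^ 2 < δ := by
    by_contra h
    push_neg at h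
    obtain ⟨t₀, ht₀, ht₀'⟩ := h
    set A : Set ℝ := Icc 0 T ∩ (fun t => c₀ * X t ^ 2) ⁻¹' (Ici δ) with hA
    have hAne : A.Nonempty := ⟨t₀, ht₀, ht₀'⟩
    have hXsqcont : ContinuousOn (fun t => c₀ * X t ^ 2) (Icc 0 T) :=
      continuousOn_const.mul (hXcont.pow 2)
    have hAclosed : IsClosed A :=
      hXsqcont.preimage_isClosed_of_isClosed isClosed_Icc isClosed_Ici
    have hAbdd : BddBelow A := ⟨0, fun x hx => hx.1.1⟩
    set c := sInf A with hc
    have hcA : c ∈ A := hAclosed.csInf_mem hAne hAbdd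
    have hcmem : c ∈ Icc 0 T := hcA.1
    have hcδ : δ ≤ c₀ * X c ^ 2 := hcA.2
    have hcpos : 0 < c := by
      rcases lt_or_eq_of_le hcmem.1 with h' | h'
      · exact h'
      · exfalso; rw [← h'] at hcδ; linarith
    have hsmall : ∀ s ∈ Ioo 0 c, c₀ * X s ^ 2 ≤ δ := by
      intro s hs
      by_contra hcon
      push_neg at hcon
      have hsA : s ∈ A := ⟨⟨hs.1.le, hs.2.le.trans hcmem.2⟩, hcon.le⟩
      exact absurd (csInf_le hAbdd hsA) (not_le.mpr hs.2)
    have hkey := absorption_key T c₀ δ hδ X Y hXcont hXdiff hYint hYnonneg hineq c hcmem hsmall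
    have hXc : X c ≤ X 0 := by
      have := hYnn c hcmem
      nlinarith [hδ.2]
    have hX0 : 0 ≤ X 0 := hXnonneg 0 ⟨le_rfl, hT.le⟩
    have hXcnn : 0 ≤ X c := hXnonneg c hcmem
    have : c₀ * X c ^ 2 ≤ c₀ * X 0 ^ 2 :=
      mul_le_mul_of_nonneg_left (pow_le_pow_left₀ hXcnn hXc 2) hc₀.le
    linarith
  intro t ht
  refine ⟨main t ht, ?_⟩
  exact absorption_key T c₀ δ hδ X Y hXcont hXdiff hYint hYnonneg hineq t ht
    (fun s hs => (main s ⟨hs.1.le, hs.2.le.trans ht.2⟩).le)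
end

section
/- (Energy identity for the ∂ₜΔ-regularized system) Suppose (v, p, S) is a smooth Ω-periodic solution on [0,T] of div v = 0, ∂v/∂t + (v·∇)v + ∇p = div S, ∂S/∂t + (v·∇)S + SW − WS − Δ∂S/∂t = D. Then ‖v(t)‖²_{L²} + ‖S(t)‖²_{L²} + ‖∇S(t)‖²_{L²} = ‖v(0)‖²_{L²} + ‖S(0)‖²_{L²} + ‖∇S(0)‖²_{L²} for all t ∈ [0,T]. -/
open Real MeasureTheory Set

/-- Partial derivative `∂f/∂x_k` (classical). -/
noncomputable def pd (f : EuclideanSpace ℝ (Fin 2) → ℝ) (k : Fin 2)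
    (x : EuclideanSpace ℝ (Fin 2)) : ℝ :=
  fderiv ℝ f x (EuclideanSpace.single k 1)

/-- The periodic cell (box) in `ℝ²`. -/
def box (L : Fin 2 → ℝ) : Set (EuclideanSpace ℝ (Fin 2)) :=
  {x | ∀ i, x i ∈ Set.Icc 0 (L i)}

/-- `D = (∇v + ∇vᵀ)/2`, the symmetric part of the velocity gradient. -/
noncomputable def Dm (v : ℝ → EuclideanSpace ℝ (Fin 2) → EuclideanSpace ℝ (Fin 2))
    (t : ℝ) (x : EuclideanSpace ℝ (Fin 2)) (i j : Fin 2) : ℝ :=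
  (pd (fun y => v t y i) j x + pd (fun y => v t y j) i x) / 2

/-- `W = (∇v − ∇vᵀ)/2`, the antisymmetric part of the velocity gradient. -/
noncomputable def Wm (v : ℝ → EuclideanSpace ℝ (Fin 2) → EuclideanSpace ℝ (Fin 2))
    (t : ℝ) (x : EuclideanSpace ℝ (Fin 2)) (i j : Fin 2) : ℝ :=
  (pd (fun y => v t y i) j x - pd (fun y => v t y j) i x) / 2

noncomputable abbrev E2 := EuclideanSpace ℝ (Fin 2)

noncomputable def eqv : E2 ≃L[ℝ] ℝ × ℝ :=
  (PiLp.continuousLinearEquiv 2 ℝ (fun _ : Fin 2 => ℝ)).trans (ContinuousLinearEquiv.finTwoArrow ℝ ℝ)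

noncomputable def meqv : E2 ≃ᵐ ℝ × ℝ :=
  (MeasurableEquiv.toLp 2 (Fin 2 → ℝ)).symm.trans (MeasurableEquiv.finTwoArrow)

lemma mp : MeasurePreserving (⇑meqv) (volume : Measure E2) volume :=
  (volume_preserving_finTwoArrow ℝ).comp (EuclideanSpace.volume_preserving_symm_measurableEquiv_toLp (Fin 2))

lemma eqv_symm_single0 (c : ℝ) : eqv.symm (c, 0) = EuclideanSpace.single (0 : Fin 2) c := by
  apply PiLp.ext; intro i; fin_cases i <;> simp [eqv] <;> rfl

lemma eqv_symm_single1 (c : ℝ) : eqv.symm (0, c) = EuclideanSpace.single (1 : Fin 2) c := by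
  apply PiLp.ext; intro i; fin_cases i <;> simp [eqv] <;> rfl

lemma box_preimage (L : Fin 2 → ℝ) :
    box L = meqv ⁻¹' (Icc ((0:ℝ),(0:ℝ)) (L 0, L 1)) := by
  ext x
  simp only [box, mem_setOf_eq, mem_preimage, Set.mem_Icc, Prod.le_def]
  constructor
  · intro h; exact ⟨⟨(h 0).1, (h 1).1⟩, ⟨(h 0).2, (h 1).2⟩⟩
  · rintro ⟨⟨a,b⟩,⟨c,d⟩⟩ i; fin_cases i <;> exact ⟨by assumption, by assumption⟩

lemma integral_pd_zero (L : Fin 2 → ℝ) (hL : ∀ i, 0 < L i) (f : E2 → ℝ)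
    (hf : ContDiff ℝ (⊤ : ℕ∞) f)
    (hper : ∀ (x : E2) k, f (x + EuclideanSpace.single k (L k)) = f x) (k : Fin 2) :
    ∫ x in box L, pd f k x = 0 := by
  set G : ℝ × ℝ → ℝ := fun z => f (eqv.symm z) with hG
  have hGc : ContDiff ℝ (⊤ : ℕ∞) G := hf.comp eqv.symm.contDiff
  have hd : ∀ z : ℝ × ℝ, HasFDerivAt G ((fderiv ℝ f (eqv.symm z)).comp
      eqv.symm.toContinuousLinearMap) z := by
    intro z
    exact ((hf.differentiable (by simp) (eqv.symm z)).hasFDerivAt).comp z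
      eqv.symm.toContinuousLinearMap.hasFDerivAt
  have hpd : ∀ z : ℝ × ℝ, pd f k (eqv.symm z) =
      (fderiv ℝ f (eqv.symm z)).comp eqv.symm.toContinuousLinearMap
        (if k = 0 then ((1:ℝ),(0:ℝ)) else ((0:ℝ),(1:ℝ))) := by
    intro z
    fin_cases k <;>
      simp only [pd, ContinuousLinearMap.comp_apply, if_true, reduceIte,
        ContinuousLinearEquiv.coe_coe] <;>
    · congr 1
      first
        | exact (eqv_symm_single0 1).symm
        | exact (eqv_symm_single1 1).symm
  have hfd : ∀ z, fderiv ℝ G z =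
      (fderiv ℝ f (eqv.symm z)).comp eqv.symm.toContinuousLinearMap := fun z => (hd z).fderiv
  have hms : ⇑meqv.symm = ⇑eqv.symm := rfl
  have hle : ((0:ℝ),(0:ℝ)) ≤ (L 0, L 1) := ⟨(hL 0).le, (hL 1).le⟩
  have step1 : ∫ x in box L, pd f k x
      = ∫ z in Icc ((0:ℝ),(0:ℝ)) (L 0, L 1), pd f k (eqv.symm z) := by
    rw [box_preimage]
    rw [← mp.setIntegral_preimage_emb meqv.measurableEmbedding
      (fun z => pd f k (eqv.symm z)) _]
    apply setIntegral_congr_fun (meqv.measurableSet_preimage.mpr measurableSet_Icc)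
    intro x _
    exact (congrArg (pd f k) (by rw [← hms, meqv.symm_apply_apply])).symm
  have hcont : Continuous fun z : ℝ × ℝ => fderiv ℝ G z
      (if k = 0 then ((1:ℝ),(0:ℝ)) else ((0:ℝ),(1:ℝ))) :=
    (hGc.continuous_fderiv (by simp)).clm_apply continuous_const
  have hper0 : ∀ y : ℝ, G (L 0, y) = G (0, y) := by
    intro y
    have h1 : ((L 0 : ℝ), y) = ((0:ℝ), y) + ((L 0 : ℝ), (0:ℝ)) := by simp
    show f _ = f _
    rw [h1, map_add, eqv_symm_single0, hper]
  have hper1 : ∀ y : ℝ, G (y, L 1) = G (y, 0) := by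
    intro y
    have h1 : ((y : ℝ), L 1) = ((y:ℝ), (0:ℝ)) + ((0:ℝ), (L 1 : ℝ)) := by simp
    show f _ = f _
    rw [h1, map_add, eqv_symm_single1, hper]
  rw [step1]
  fin_cases k <;> simp only [Fin.mk_zero, Fin.mk_one] at *
  · have hpd0 : ∀ z : ℝ × ℝ, pd f 0 (eqv.symm z) = fderiv ℝ G z ((1:ℝ),(0:ℝ)) := by
      intro z; rw [hfd]; simpa using hpd z
    rw [setIntegral_congr_fun measurableSet_Icc (fun z _ => hpd0 z)]
    have hcont : Continuous fun z : ℝ × ℝ => fderiv ℝ G z ((1:ℝ),(0:ℝ)) :=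
      (hGc.continuous_fderiv (by simp)).clm_apply continuous_const
    have hInt : IntegrableOn (fun z : ℝ × ℝ => fderiv ℝ G z ((1:ℝ),(0:ℝ)) +
        (0 : ℝ × ℝ →L[ℝ] ℝ) ((0:ℝ),(1:ℝ))) (Icc ((0:ℝ),(0:ℝ)) (L 0, L 1)) := by
      simpa using hcont.continuousOn.integrableOn_compact isCompact_Icc
    have hdiv := integral_divergence_prod_Icc_of_hasFDerivAt_off_countable_of_le
      G (fun _ => 0) (fun z => fderiv ℝ G z) (fun _ => 0)
      ((0:ℝ),(0:ℝ)) (L 0, L 1) hle ∅ countable_empty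
      hGc.continuous.continuousOn continuousOn_const
      (fun x _ => (hGc.differentiable (by simp) x).hasFDerivAt)
      (fun x _ => hasFDerivAt_const 0 x) hInt
    simp only [ContinuousLinearMap.zero_apply, add_zero] at hdiv
    rw [hdiv, intervalIntegral.integral_congr (g := fun y => G (0, y)) (fun y _ => hper0 y)]
    simp
  · have hpd1 : ∀ z : ℝ × ℝ, pd f 1 (eqv.symm z) = fderiv ℝ G z ((0:ℝ),(1:ℝ)) := by
      intro z; rw [hfd]; simpa using hpd z
    rw [setIntegral_congr_fun measurableSet_Icc (fun z _ => hpd1 z)]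
    have hcont : Continuous fun z : ℝ × ℝ => fderiv ℝ G z ((0:ℝ),(1:ℝ)) :=
      (hGc.continuous_fderiv (by simp)).clm_apply continuous_const
    have hInt : IntegrableOn (fun z : ℝ × ℝ => (0 : ℝ × ℝ →L[ℝ] ℝ) ((1:ℝ),(0:ℝ)) +
        fderiv ℝ G z ((0:ℝ),(1:ℝ))) (Icc ((0:ℝ),(0:ℝ)) (L 0, L 1)) := by
      simpa using hcont.continuousOn.integrableOn_compact isCompact_Icc
    have hdiv := integral_divergence_prod_Icc_of_hasFDerivAt_off_countable_of_le
      (fun _ => 0) G (fun _ => 0) (fun z => fderiv ℝ G z)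
      ((0:ℝ),(0:ℝ)) (L 0, L 1) hle ∅ countable_empty
      continuousOn_const hGc.continuous.continuousOn
      (fun x _ => hasFDerivAt_const 0 x)
      (fun x _ => (hGc.differentiable (by simp) x).hasFDerivAt) hInt
    simp only [ContinuousLinearMap.zero_apply, zero_add] at hdiv
    rw [hdiv, intervalIntegral.integral_congr (g := fun y => G (y, 0)) (fun y _ => hper1 y)]
    simp

abbrev Q2 := ℝ × E2

noncomputable def Dt (F : Q2 → ℝ) : Q2 → ℝ := fun q => fderiv ℝ F q (1, 0)
noncomputable def Dx (k : Fin 2) (F : Q2 → ℝ) : Q2 → ℝ :=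
  fun q => fderiv ℝ F q (0, EuclideanSpace.single k 1)

lemma contDiff_Dt {F : Q2 → ℝ} (hF : ContDiff ℝ (⊤ : ℕ∞) F) : ContDiff ℝ (⊤ : ℕ∞) (Dt F) :=
  (hF.fderiv_right (by simp)).clm_apply contDiff_const

lemma contDiff_Dx {F : Q2 → ℝ} (hF : ContDiff ℝ (⊤ : ℕ∞) F) (k : Fin 2) : ContDiff ℝ (⊤ : ℕ∞) (Dx k F) :=
  (hF.fderiv_right (by simp)).clm_apply contDiff_const

lemma hasDerivAt_slice {F : Q2 → ℝ} (hF : ContDiff ℝ (⊤ : ℕ∞) F) (t : ℝ) (x : E2) :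
    HasDerivAt (fun τ => F (τ, x)) (Dt F (t, x)) t := by
  have h1 : HasDerivAt (fun τ : ℝ => ((τ, x) : Q2)) ((1 : ℝ), (0 : E2)) t :=
    (hasDerivAt_id t).prodMk (hasDerivAt_const t x)
  exact (hF.differentiable (by simp) (t, x)).hasFDerivAt.comp_hasDerivAt t h1

lemma deriv_slice {F : Q2 → ℝ} (hF : ContDiff ℝ (⊤ : ℕ∞) F) (t : ℝ) (x : E2) :
    deriv (fun τ => F (τ, x)) t = Dt F (t, x) := (hasDerivAt_slice hF t x).deriv

lemma hasFDerivAt_slice {F : Q2 → ℝ} (hF : ContDiff ℝ (⊤ : ℕ∞) F) (t : ℝ) (x : E2) :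
    HasFDerivAt (fun y => F (t, y))
      ((fderiv ℝ F (t, x)).comp (ContinuousLinearMap.inr ℝ ℝ E2)) x := by
  have h1 : HasFDerivAt (fun y : E2 => ((t, y) : Q2)) (ContinuousLinearMap.inr ℝ ℝ E2) x :=
    (hasFDerivAt_const t x).prodMk (hasFDerivAt_id x)
  exact (hF.differentiable (by simp) (t, x)).hasFDerivAt.comp x h1

lemma pd_slice {F : Q2 → ℝ} (hF : ContDiff ℝ (⊤ : ℕ∞) F) (t : ℝ) (x : E2) (k : Fin 2) :
    pd (fun y => F (t, y)) k x = Dx k F (t, x) := by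
  rw [pd, (hasFDerivAt_slice hF t x).fderiv]; rfl

lemma Dx_Dt_comm {F : Q2 → ℝ} (hF : ContDiff ℝ (⊤ : ℕ∞) F) (k : Fin 2) (q : Q2) :
    Dx k (Dt F) q = Dt (Dx k F) q := by
  have hΦd : DifferentiableAt ℝ (fderiv ℝ F) q :=
    ((hF.fderiv_right (m := (⊤ : ℕ∞)) (by simp)).differentiable (by simp)) q
  have hA : HasFDerivAt (fderiv ℝ F) (fderiv ℝ (fderiv ℝ F) q) q := hΦd.hasFDerivAt
  have h1 : ∀ w : Q2, HasFDerivAt (fun q : Q2 => fderiv ℝ F q w)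
      ((ContinuousLinearMap.apply ℝ ℝ w).comp (fderiv ℝ (fderiv ℝ F) q)) q :=
    fun w => (ContinuousLinearMap.apply ℝ ℝ w).hasFDerivAt.comp q hA
  have e1 : Dx k (Dt F) q
      = fderiv ℝ (fderiv ℝ F) q ((0 : ℝ), EuclideanSpace.single k 1) ((1:ℝ), (0:E2)) := by
    show fderiv ℝ (fun q : Q2 => fderiv ℝ F q ((1:ℝ), (0:E2))) q _ = _
    rw [(h1 ((1:ℝ), (0:E2))).fderiv]; rfl
  have e2 : Dt (Dx k F) q
      = fderiv ℝ (fderiv ℝ F) q ((1:ℝ), (0:E2)) ((0 : ℝ), EuclideanSpace.single k 1) := by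
    show fderiv ℝ (fun q : Q2 => fderiv ℝ F q ((0 : ℝ), EuclideanSpace.single k 1)) q _ = _
    rw [(h1 ((0 : ℝ), EuclideanSpace.single k 1)).fderiv]; rfl
  rw [e1, e2]
  exact second_derivative_symmetric (fun y => (hF.differentiable (by simp) y).hasFDerivAt) hA _ _

lemma Dx_mul {A B : Q2 → ℝ} (hA : ContDiff ℝ (⊤ : ℕ∞) A) (hB : ContDiff ℝ (⊤ : ℕ∞) B) (k : Fin 2) (q : Q2) :
    Dx k (fun q => A q * B q) q = Dx k A q * B q + A q * Dx k B q := by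
  show fderiv ℝ _ q _ = _
  rw [fderiv_fun_mul (hA.differentiable (by simp) q)
    (hB.differentiable (by simp) q)]
  simp [Dx]; ring

lemma Dx_add {A B : Q2 → ℝ} (hA : ContDiff ℝ (⊤ : ℕ∞) A) (hB : ContDiff ℝ (⊤ : ℕ∞) B) (k : Fin 2) (q : Q2) :
    Dx k (fun q => A q + B q) q = Dx k A q + Dx k B q := by
  show fderiv ℝ _ q _ = _
  rw [fderiv_fun_add (hA.differentiable (by simp) q)
    (hB.differentiable (by simp) q)]
  rfl

lemma fderiv_shift {F : Q2 → ℝ} (hF : ContDiff ℝ (⊤ : ℕ∞) F) (c : Q2)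
    (h : ∀ q, F (q + c) = F q) (q : Q2) : fderiv ℝ F (q + c) = fderiv ℝ F q := by
  have h2 : HasFDerivAt (fun y : Q2 => F (y + c)) (fderiv ℝ F (q + c)) q := by
    have := (hF.differentiable (by simp) (q + c)).hasFDerivAt.comp q
      ((hasFDerivAt_id q).add_const c)
    simpa [Function.comp_def] using this
  have h3 : (fun y : Q2 => F (y + c)) = F := funext h
  rw [h3] at h2
  exact h2.fderiv.symm

lemma Dt_shift {F : Q2 → ℝ} (hF : ContDiff ℝ (⊤ : ℕ∞) F) (c : Q2)
    (h : ∀ q, F (q + c) = F q) (q : Q2) : Dt F (q + c) = Dt F q := by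
  unfold Dt; rw [fderiv_shift hF c h q]

lemma Dx_shift {F : Q2 → ℝ} (hF : ContDiff ℝ (⊤ : ℕ∞) F) (c : Q2)
    (h : ∀ q, F (q + c) = F q) (k : Fin 2) (q : Q2) : Dx k F (q + c) = Dx k F q := by
  unfold Dx; rw [fderiv_shift hF c h q]

lemma hasDerivAt_line {A : Q2 → ℝ} (hA : ContDiff ℝ (⊤ : ℕ∞) A) (q w : Q2) :
    HasDerivAt (fun s : ℝ => A (q + s • w)) (fderiv ℝ A q w) 0 := by
  have hline : HasDerivAt (fun s : ℝ => q + s • w) w 0 := by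
    have h1 : HasDerivAt (fun s : ℝ => s • w) ((1:ℝ) • w) 0 := (hasDerivAt_id (0:ℝ)).smul_const w
    simpa using h1.const_add q
  have h2 := (hA.differentiable (by simp) (q + (0:ℝ) • w)).hasFDerivAt.comp_hasDerivAt 0 hline
  simpa [Function.comp_def] using h2


noncomputable def Vj (v : ℝ → E2 → E2) (i : Fin 2) : Q2 → ℝ := fun q => v q.1 q.2 i
noncomputable def Pj (p : ℝ → E2 → ℝ) : Q2 → ℝ := fun q => p q.1 q.2
noncomputable def Sj (S : ℝ → E2 → Fin 2 → Fin 2 → ℝ) (i j : Fin 2) : Q2 → ℝ :=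
  fun q => S q.1 q.2 i j

section Joint
variable {v : ℝ → E2 → E2} {p : ℝ → E2 → ℝ} {S : ℝ → E2 → Fin 2 → Fin 2 → ℝ}

lemma contDiff_Vj (hv : ContDiff ℝ (⊤ : ℕ∞) (fun q : Q2 => v q.1 q.2)) (i : Fin 2) :
    ContDiff ℝ (⊤ : ℕ∞) (Vj v i) := (contDiff_euclidean.mp hv) i

lemma contDiff_Pj (hp : ContDiff ℝ (⊤ : ℕ∞) (fun q : Q2 => p q.1 q.2)) :
    ContDiff ℝ (⊤ : ℕ∞) (Pj p) := hp

lemma contDiff_Sj (hS : ∀ i j, ContDiff ℝ (⊤ : ℕ∞) (fun q : Q2 => S q.1 q.2 i j)) (i j : Fin 2) :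
    ContDiff ℝ (⊤ : ℕ∞) (Sj S i j) := hS i j

lemma cV (hv : ContDiff ℝ (⊤ : ℕ∞) (fun q : Q2 => v q.1 q.2)) :
    ∀ (t : ℝ) (x : E2) (i k : Fin 2),
      pd (fun y => v t y i) k x = Dx k (Vj v i) (t, x) :=
  fun t x i k => pd_slice (contDiff_Vj hv i) t x k

lemma cVt (hv : ContDiff ℝ (⊤ : ℕ∞) (fun q : Q2 => v q.1 q.2)) :
    ∀ (t : ℝ) (x : E2) (i : Fin 2),
      deriv (fun τ => v τ x i) t = Dt (Vj v i) (t, x) :=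
  fun t x i => deriv_slice (contDiff_Vj hv i) t x

lemma cP (hp : ContDiff ℝ (⊤ : ℕ∞) (fun q : Q2 => p q.1 q.2)) :
    ∀ (t : ℝ) (x : E2) (i : Fin 2),
      pd (fun y => p t y) i x = Dx i (Pj p) (t, x) :=
  fun t x i => pd_slice (contDiff_Pj hp) t x i

lemma cS (hS : ∀ i j, ContDiff ℝ (⊤ : ℕ∞) (fun q : Q2 => S q.1 q.2 i j)) :
    ∀ (t : ℝ) (x : E2) (i j k : Fin 2),
      pd (fun y => S t y i j) k x = Dx k (Sj S i j) (t, x) :=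
  fun t x i j k => pd_slice (contDiff_Sj hS i j) t x k

lemma cSt (hS : ∀ i j, ContDiff ℝ (⊤ : ℕ∞) (fun q : Q2 => S q.1 q.2 i j)) :
    ∀ (t : ℝ) (x : E2) (i j : Fin 2),
      deriv (fun τ => S τ x i j) t = Dt (Sj S i j) (t, x) :=
  fun t x i j => deriv_slice (contDiff_Sj hS i j) t x

lemma cS3 (hS : ∀ i j, ContDiff ℝ (⊤ : ℕ∞) (fun q : Q2 => S q.1 q.2 i j)) :
    ∀ (t : ℝ) (x : E2) (i j k : Fin 2),
      pd (fun y => pd (fun z => deriv (fun τ => S τ z i j) t) k y) k x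
        = Dx k (Dx k (Dt (Sj S i j))) (t, x) := by
  intro t x i j k
  have e1 : (fun z => deriv (fun τ => S τ z i j) t) = fun z => Dt (Sj S i j) (t, z) :=
    funext fun z => cSt hS t z i j
  rw [e1]
  have e2 : (fun y => pd (fun z => Dt (Sj S i j) (t, z)) k y)
      = fun y => Dx k (Dt (Sj S i j)) (t, y) :=
    funext fun y => pd_slice (contDiff_Dt (contDiff_Sj hS i j)) t y k
  rw [e2]
  exact pd_slice (contDiff_Dx (contDiff_Dt (contDiff_Sj hS i j)) k) t x k

lemma cW (hv : ContDiff ℝ (⊤ : ℕ∞) (fun q : Q2 => v q.1 q.2)) :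
    ∀ (t : ℝ) (x : E2) (a b : Fin 2),
      Wm v t x a b = (Dx b (Vj v a) (t, x) - Dx a (Vj v b) (t, x)) / 2 := by
  intro t x a b
  rw [Wm, cV hv t x a b, cV hv t x b a]

lemma cD (hv : ContDiff ℝ (⊤ : ℕ∞) (fun q : Q2 => v q.1 q.2)) :
    ∀ (t : ℝ) (x : E2) (i j : Fin 2),
      Dm v t x i j = (Dx j (Vj v i) (t, x) + Dx i (Vj v j) (t, x)) / 2 := by
  intro t x i j
  rw [Dm, cV hv t x i j, cV hv t x j i]

end Joint

noncomputable def eJ (v : ℝ → E2 → E2) (S : ℝ → E2 → Fin 2 → Fin 2 → ℝ) : Q2 → ℝ := fun q =>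
  (Vj v 0 q * Vj v 0 q + Vj v 1 q * Vj v 1 q)
  + (Sj S 0 0 q * Sj S 0 0 q + Sj S 0 1 q * Sj S 0 1 q + Sj S 1 0 q * Sj S 1 0 q + Sj S 1 1 q * Sj S 1 1 q)
  + (Dx 0 (Sj S 0 0) q * Dx 0 (Sj S 0 0) q + Dx 1 (Sj S 0 0) q * Dx 1 (Sj S 0 0) q + Dx 0 (Sj S 0 1) q * Dx 0 (Sj S 0 1) q + Dx 1 (Sj S 0 1) q * Dx 1 (Sj S 0 1) q + Dx 0 (Sj S 1 0) q * Dx 0 (Sj S 1 0) q + Dx 1 (Sj S 1 0) q * Dx 1 (Sj S 1 0) q + Dx 0 (Sj S 1 1) q * Dx 0 (Sj S 1 1) q + Dx 1 (Sj S 1 1) q * Dx 1 (Sj S 1 1) q)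

lemma contDiff_eJ {v : ℝ → E2 → E2} {S : ℝ → E2 → Fin 2 → Fin 2 → ℝ}
    (hv : ContDiff ℝ (⊤ : ℕ∞) (fun q : Q2 => v q.1 q.2))
    (hS : ∀ i j, ContDiff ℝ (⊤ : ℕ∞) (fun q : Q2 => S q.1 q.2 i j)) :
    ContDiff ℝ (⊤ : ℕ∞) (eJ v S) := by
  unfold eJ
  exact (((((contDiff_Vj hv 0).mul (contDiff_Vj hv 0)).add
      ((contDiff_Vj hv 1).mul (contDiff_Vj hv 1))).add
      ((((((contDiff_Sj hS 0 0).mul (contDiff_Sj hS 0 0)).add ((contDiff_Sj hS 0 1).mul (contDiff_Sj hS 0 1))).add ((contDiff_Sj hS 1 0).mul (contDiff_Sj hS 1 0))).add ((contDiff_Sj hS 1 1).mul (contDiff_Sj hS 1 1))))).add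
      ((((((((((contDiff_Dx (contDiff_Sj hS 0 0) 0).mul (contDiff_Dx (contDiff_Sj hS 0 0) 0)).add ((contDiff_Dx (contDiff_Sj hS 0 0) 1).mul (contDiff_Dx (contDiff_Sj hS 0 0) 1))).add ((contDiff_Dx (contDiff_Sj hS 0 1) 0).mul (contDiff_Dx (contDiff_Sj hS 0 1) 0))).add ((contDiff_Dx (contDiff_Sj hS 0 1) 1).mul (contDiff_Dx (contDiff_Sj hS 0 1) 1))).add ((contDiff_Dx (contDiff_Sj hS 1 0) 0).mul (contDiff_Dx (contDiff_Sj hS 1 0) 0))).add ((contDiff_Dx (contDiff_Sj hS 1 0) 1).mul (contDiff_Dx (contDiff_Sj hS 1 0) 1))).add ((contDiff_Dx (contDiff_Sj hS 1 1) 0).mul (contDiff_Dx (contDiff_Sj hS 1 1) 0))).add ((contDiff_Dx (contDiff_Sj hS 1 1) 1).mul (contDiff_Dx (contDiff_Sj hS 1 1) 1)))))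

lemma deriv_eJ {v : ℝ → E2 → E2} {S : ℝ → E2 → Fin 2 → Fin 2 → ℝ}
    (hv : ContDiff ℝ (⊤ : ℕ∞) (fun q : Q2 => v q.1 q.2))
    (hS : ∀ i j, ContDiff ℝ (⊤ : ℕ∞) (fun q : Q2 => S q.1 q.2 i j))
    (q w : Q2) :
    fderiv ℝ (eJ v S) q w =
      2 * (Vj v 0 q * fderiv ℝ (Vj v 0) q w + Vj v 1 q * fderiv ℝ (Vj v 1) q w)
      + 2 * (Sj S 0 0 q * fderiv ℝ (Sj S 0 0) q w + Sj S 0 1 q * fderiv ℝ (Sj S 0 1) q w + Sj S 1 0 q * fderiv ℝ (Sj S 1 0) q w + Sj S 1 1 q * fderiv ℝ (Sj S 1 1) q w)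
      + 2 * (Dx 0 (Sj S 0 0) q * fderiv ℝ (Dx 0 (Sj S 0 0)) q w + Dx 1 (Sj S 0 0) q * fderiv ℝ (Dx 1 (Sj S 0 0)) q w + Dx 0 (Sj S 0 1) q * fderiv ℝ (Dx 0 (Sj S 0 1)) q w + Dx 1 (Sj S 0 1) q * fderiv ℝ (Dx 1 (Sj S 0 1)) q w + Dx 0 (Sj S 1 0) q * fderiv ℝ (Dx 0 (Sj S 1 0)) q w + Dx 1 (Sj S 1 0) q * fderiv ℝ (Dx 1 (Sj S 1 0)) q w + Dx 0 (Sj S 1 1) q * fderiv ℝ (Dx 0 (Sj S 1 1)) q w + Dx 1 (Sj S 1 1) q * fderiv ℝ (Dx 1 (Sj S 1 1)) q w) := by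
  have hline : ∀ (A : Q2 → ℝ), ContDiff ℝ (⊤ : ℕ∞) A →
      HasDerivAt (fun s : ℝ => A (q + s • w)) (fderiv ℝ A q w) 0 :=
    fun A hA => hasDerivAt_line hA q w
  have h := (((((hline (Vj v 0) (contDiff_Vj hv 0)).mul (hline (Vj v 0) (contDiff_Vj hv 0))).add ((hline (Vj v 1) (contDiff_Vj hv 1)).mul (hline (Vj v 1) (contDiff_Vj hv 1)))).add (((((hline (Sj S 0 0) (contDiff_Sj hS 0 0)).mul (hline (Sj S 0 0) (contDiff_Sj hS 0 0))).add ((hline (Sj S 0 1) (contDiff_Sj hS 0 1)).mul (hline (Sj S 0 1) (contDiff_Sj hS 0 1)))).add ((hline (Sj S 1 0) (contDiff_Sj hS 1 0)).mul (hline (Sj S 1 0) (contDiff_Sj hS 1 0)))).add ((hline (Sj S 1 1) (contDiff_Sj hS 1 1)).mul (hline (Sj S 1 1) (contDiff_Sj hS 1 1))))).add (((((((((hline (Dx 0 (Sj S 0 0)) (contDiff_Dx (contDiff_Sj hS 0 0) 0)).mul (hline (Dx 0 (Sj S 0 0)) (contDiff_Dx (contDiff_Sj hS 0 0) 0))).add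 ((hline (Dx 1 (Sj S 0 0)) (contDiff_Dx (contDiff_Sj hS 0 0) 1)).mul (hline (Dx 1 (Sj S 0 0)) (contDiff_Dx (contDiff_Sj hS 0 0) 1)))).add ((hline (Dx 0 (Sj S 0 1)) (contDiff_Dx (contDiff_Sj hS 0 1) 0)).mul (hline (Dx 0 (Sj S 0 1)) (contDiff_Dx (contDiff_Sj hS 0 1) 0)))).add ((hline (Dx 1 (Sj S 0 1)) (contDiff_Dx (contDiff_Sj hS 0 1) 1)).mul (hline (Dx 1 (Sj S 0 1)) (contDiff_Dx (contDiff_Sj hS 0 1) 1)))).add ((hline (Dx 0 (Sj S 1 0)) (contDiff_Dx (contDiff_Sj hS 1 0) 0)).mul (hline (Dx 0 (Sj S 1 0)) (contDiff_Dx (contDiff_Sj hS 1 0) 0)))).add ((hline (Dx 1 (Sj S 1 0)) (contDiff_Dx (contDiff_Sj hS 1 0) 1)).mul (hline (Dx 1 (Sj S 1 0)) (contDiff_Dx (contDiff_Sj hS 1 0) 1)))).add ((hline (Dx 0 (Sj S 1 1)) (contDiff_Dx (contDiff_Sj hS 1 1) 0)).mul (hline (Dx 0 (Sj S 1 1)) (contDiff_Dx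 (contDiff_Sj hS 1 1) 0)))).add ((hline (Dx 1 (Sj S 1 1)) (contDiff_Dx (contDiff_Sj hS 1 1) 1)).mul (hline (Dx 1 (Sj S 1 1)) (contDiff_Dx (contDiff_Sj hS 1 1) 1)))))
  have h2 : HasDerivAt (fun s : ℝ => eJ v S (q + s • w)) _ 0 := h
  have h3 := (hasDerivAt_line (contDiff_eJ hv hS) q w).unique h2
  rw [h3]; simp only [zero_smul, add_zero]; ring

noncomputable def Phi (VK P V0 V1 S00 S01 S10 S11 T0 T1 G00 G01 G10 G11 : Q2 → ℝ) : Q2 → ℝ := fun q =>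
  (-((V0 q * V0 q + V1 q * V1 q) + (S00 q * S00 q + S01 q * S01 q + S10 q * S10 q + S11 q * S11 q))) * VK q
  - 2 * (P q * VK q)
  + 2 * (V0 q * T0 q + V1 q * T1 q)
  + 2 * (S00 q * G00 q + S01 q * G01 q + S10 q * G10 q + S11 q * G11 q)

lemma contDiff_Phi {VK P V0 V1 S00 S01 S10 S11 T0 T1 G00 G01 G10 G11 : Q2 → ℝ} (hVK : ContDiff ℝ (⊤ : ℕ∞) VK) (hP : ContDiff ℝ (⊤ : ℕ∞) P) (hV0 : ContDiff ℝ (⊤ : ℕ∞) V0) (hV1 : ContDiff ℝ (⊤ : ℕ∞) V1) (hS00 : ContDiff ℝ (⊤ : ℕ∞) S00) (hS01 : ContDiff ℝ (⊤ : ℕ∞) S01) (hS10 : ContDiff ℝ (⊤ : ℕ∞) S10) (hS11 : ContDiff ℝ (⊤ : ℕ∞) S11) (hT0 : ContDiff ℝ (⊤ : ℕ∞) T0) (hT1 : ContDiff ℝ (⊤ : ℕ∞) T1) (hG00 : ContDiff ℝ (⊤ : ℕ∞) G00) (hG01 : ContDiff ℝ (⊤ : ℕ∞) G01) (hG10 :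 ContDiff ℝ (⊤ : ℕ∞) G10) (hG11 : ContDiff ℝ (⊤ : ℕ∞) G11) :
    ContDiff ℝ (⊤ : ℕ∞) (Phi VK P V0 V1 S00 S01 S10 S11 T0 T1 G00 G01 G10 G11) := by
  unfold Phi
  exact (((((((hV0.mul hV0).add (hV1.mul hV1)).add ((((hS00.mul hS00).add (hS01.mul hS01)).add (hS10.mul hS10)).add (hS11.mul hS11))).neg.mul hVK).sub (contDiff_const.mul (hP.mul hVK))).add (contDiff_const.mul ((hV0.mul hT0).add (hV1.mul hT1)))).add (contDiff_const.mul ((((hS00.mul hG00).add (hS01.mul hG01)).add (hS10.mul hG10)).add (hS11.mul hG11))))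

lemma deriv_Phi {VK P V0 V1 S00 S01 S10 S11 T0 T1 G00 G01 G10 G11 : Q2 → ℝ} (hVK : ContDiff ℝ (⊤ : ℕ∞) VK) (hP : ContDiff ℝ (⊤ : ℕ∞) P) (hV0 : ContDiff ℝ (⊤ : ℕ∞) V0) (hV1 : ContDiff ℝ (⊤ : ℕ∞) V1) (hS00 : ContDiff ℝ (⊤ : ℕ∞) S00) (hS01 : ContDiff ℝ (⊤ : ℕ∞) S01) (hS10 : ContDiff ℝ (⊤ : ℕ∞) S10) (hS11 : ContDiff ℝ (⊤ : ℕ∞) S11) (hT0 : ContDiff ℝ (⊤ : ℕ∞) T0) (hT1 : ContDiff ℝ (⊤ : ℕ∞) T1) (hG00 : ContDiff ℝ (⊤ : ℕ∞) G00) (hG01 : ContDiff ℝ (⊤ : ℕ∞) G01) (hG10 : ContDiff ℝ (⊤ : ℕ∞) G10) (hG11 : ContDiff ℝ (⊤ : ℕ∞) G11) (q w : Q2) :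
    fderiv ℝ (Phi VK P V0 V1 S00 S01 S10 S11 T0 T1 G00 G01 G10 G11) q w =
      (-(2 * (V0 q * fderiv ℝ V0 q w) + 2 * (V1 q * fderiv ℝ V1 q w)
        + 2 * (S00 q * fderiv ℝ S00 q w) + 2 * (S01 q * fderiv ℝ S01 q w)
        + 2 * (S10 q * fderiv ℝ S10 q w) + 2 * (S11 q * fderiv ℝ S11 q w))) * VK q
      + (-((V0 q * V0 q + V1 q * V1 q) + (S00 q * S00 q + S01 q * S01 q + S10 q * S10 q + S11 q * S11 q))) * fderiv ℝ VK q w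
      - 2 * (fderiv ℝ P q w * VK q + P q * fderiv ℝ VK q w)
      + 2 * (fderiv ℝ V0 q w * T0 q + V0 q * fderiv ℝ T0 q w + fderiv ℝ V1 q w * T1 q + V1 q * fderiv ℝ T1 q w)
      + 2 * (fderiv ℝ S00 q w * G00 q + S00 q * fderiv ℝ G00 q w + fderiv ℝ S01 q w * G01 q + S01 q * fderiv ℝ G01 q w
        + fderiv ℝ S10 q w * G10 q + S10 q * fderiv ℝ G10 q w + fderiv ℝ S11 q w * G11 q + S11 q * fderiv ℝ G11 q w) := by
  have hline : ∀ (A : Q2 → ℝ), ContDiff ℝ (⊤ : ℕ∞) A →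
      HasDerivAt (fun s : ℝ => A (q + s • w)) (fderiv ℝ A q w) 0 :=
    fun A hA => hasDerivAt_line hA q w
  have h := ((((((((hline V0 hV0).mul (hline V0 hV0)).add ((hline V1 hV1).mul (hline V1 hV1))).add (((((hline S00 hS00).mul (hline S00 hS00)).add ((hline S01 hS01).mul (hline S01 hS01))).add ((hline S10 hS10).mul (hline S10 hS10))).add ((hline S11 hS11).mul (hline S11 hS11)))).neg.mul (hline VK hVK)).sub (HasDerivAt.const_mul 2 ((hline P hP).mul (hline VK hVK)))).add (HasDerivAt.const_mul 2 (((hline V0 hV0).mul (hline T0 hT0)).add ((hline V1 hV1).mul (hline T1 hT1))))).add (HasDerivAt.const_mul 2 (((((hline S00 hS00).mul (hline G00 hG00)).add ((hline S01 hS01).mul (hline G01 hG01))).add ((hline S10 hS10).mul (hline G10 hG10))).add ((hline S11 hS11).mul (hline G11 hG11)))))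
  have h2 : HasDerivAt (fun s : ℝ => Phi VK P V0 V1 S00 S01 S10 S11 T0 T1 G00 G01 G10 G11 (q + s • w)) _ 0 := h
  have h3 := (hasDerivAt_line (contDiff_Phi hVK hP hV0 hV1 hS00 hS01 hS10 hS11 hT0 hT1 hG00 hG01 hG10 hG11) q w).unique h2
  rw [h3]; simp only [zero_smul, add_zero, Pi.mul_apply, Pi.add_apply, Pi.neg_apply]; ring

lemma Phi_shift {VK P V0 V1 S00 S01 S10 S11 T0 T1 G00 G01 G10 G11 : Q2 → ℝ} {c : Q2} (pVK : ∀ q, VK (q + c) = VK q) (pP : ∀ q, P (q + c) = P q) (pV0 : ∀ q, V0 (q + c) = V0 q) (pV1 : ∀ q, V1 (q + c) = V1 q) (pS00 : ∀ q, S00 (q + c) = S00 q) (pS01 : ∀ q, S01 (q + c) = S01 q) (pS10 : ∀ q, S10 (q + c) = S10 q) (pS11 : ∀ q, S11 (q + c) = S11 q) (pT0 : ∀ q, T0 (q + c) = T0 q) (pT1 : ∀ q, T1 (q + c) = T1 q) (pG00 : ∀ q, G00 (q + c) = G00 q) (pG01 : ∀ q, G01 (q + c) = G01 q) (pG10 :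 ∀ q, G10 (q + c) = G10 q) (pG11 : ∀ q, G11 (q + c) = G11 q) :
    ∀ q, Phi VK P V0 V1 S00 S01 S10 S11 T0 T1 G00 G01 G10 G11 (q + c) = Phi VK P V0 V1 S00 S01 S10 S11 T0 T1 G00 G01 G10 G11 q := by
  intro q
  simp only [Phi]
  rw [pVK q, pP q, pV0 q, pV1 q, pS00 q, pS01 q, pS10 q, pS11 q, pT0 q, pT1 q, pG00 q, pG01 q, pG10 q, pG11 q]

lemma measurableSet_box (L : Fin 2 → ℝ) : MeasurableSet (box L) := by
  rw [box_preimage]; exact meqv.measurable measurableSet_Icc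

lemma isCompact_box (L : Fin 2 → ℝ) : IsCompact (box L) := by
  rw [box_preimage]
  have h1 : ∀ x : E2, eqv.symm (meqv x) = x := fun x => meqv.symm_apply_apply x
  have h2 : ∀ z : ℝ × ℝ, meqv (eqv.symm z) = z := fun z => meqv.apply_symm_apply z
  have e : ⇑meqv ⁻¹' (Icc ((0:ℝ),(0:ℝ)) (L 0, L 1))
      = ⇑eqv.symm '' (Icc ((0:ℝ),(0:ℝ)) (L 0, L 1)) := by
    ext x
    constructor
    · intro hx; exact ⟨meqv x, hx, h1 x⟩
    · rintro ⟨z, hz, rfl⟩; simpa [Set.mem_preimage, h2 z] using hz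
  rw [e]
  exact (isCompact_Icc.image eqv.symm.continuous)

lemma shiftJ {A : Q2 → ℝ} {a : E2} (h : ∀ (t : ℝ) (x : E2), A (t, x + a) = A (t, x)) :
    ∀ q : Q2, A (q + ((0:ℝ), a)) = A q := by
  rintro ⟨t, x⟩
  rw [Prod.mk_add_mk, add_zero]
  exact h t x

lemma slice_per {A : Q2 → ℝ} {a : E2} (h : ∀ q : Q2, A (q + ((0:ℝ), a)) = A q)
    (t : ℝ) (x : E2) : A (t, x + a) = A (t, x) := by
  have := h (t, x)
  rwa [Prod.mk_add_mk, add_zero] at this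

lemma Vj_apply (v : ℝ → E2 → E2) (i : Fin 2) (t : ℝ) (x : E2) :
    Vj v i (t, x) = v t x i := rfl
lemma Pj_apply (p : ℝ → E2 → ℝ) (t : ℝ) (x : E2) : Pj p (t, x) = p t x := rfl
lemma Sj_apply (S : ℝ → E2 → Fin 2 → Fin 2 → ℝ) (i j : Fin 2) (t : ℝ) (x : E2) :
    Sj S i j (t, x) = S t x i j := rfl

section Main
variable {v : ℝ → E2 → E2} {p : ℝ → E2 → ℝ} {S : ℝ → E2 → Fin 2 → Fin 2 → ℝ}

lemma integrand_eq (hS : ∀ i j, ContDiff ℝ (⊤ : ℕ∞) (fun q : Q2 => S q.1 q.2 i j)) (t : ℝ) (x : E2) :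
    ((∑ i, (v t x i) ^ 2) + (∑ i, ∑ j, (S t x i j) ^ 2)
        + ∑ i, ∑ j, ∑ k, (pd (fun y => S t y i j) k x) ^ 2) = eJ v S (t, x) := by
  simp only [Fin.sum_univ_two]
  rw [cS hS t x 0 0 0, cS hS t x 0 0 1, cS hS t x 0 1 0, cS hS t x 0 1 1, cS hS t x 1 0 0, cS hS t x 1 0 1, cS hS t x 1 1 0, cS hS t x 1 1 1]
  simp only [eJ, Vj, Sj]
  ring

lemma hdivJ (hv : ContDiff ℝ (⊤ : ℕ∞) (fun q : Q2 => v q.1 q.2))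
    (hdiv : ∀ t x, ∑ k, pd (fun y => v t y k) k x = 0) :
    ∀ (t : ℝ) (x : E2), Dx 0 (Vj v 0) (t, x) + Dx 1 (Vj v 1) (t, x) = 0 := by
  intro t x
  have h := hdiv t x
  simp only [Fin.sum_univ_two] at h
  rw [cV hv t x 0 0, cV hv t x 1 1] at h
  exact h

lemma hmomJ (hv : ContDiff ℝ (⊤ : ℕ∞) (fun q : Q2 => v q.1 q.2))
    (hp : ContDiff ℝ (⊤ : ℕ∞) (fun q : Q2 => p q.1 q.2))
    (hS : ∀ i j, ContDiff ℝ (⊤ : ℕ∞) (fun q : Q2 => S q.1 q.2 i j))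
    (hmom : ∀ t x i,
      deriv (fun τ => v τ x i) t + (∑ k, v t x k * pd (fun y => v t y i) k x)
        + pd (fun y => p t y) i x = ∑ k, pd (fun y => S t y i k) k x) :
    ∀ (t : ℝ) (x : E2) (i : Fin 2),
      Dt (Vj v i) (t, x) =
        (Dx 0 (Sj S i 0) (t, x) + Dx 1 (Sj S i 1) (t, x))
        - (Vj v 0 (t, x) * Dx 0 (Vj v i) (t, x) + Vj v 1 (t, x) * Dx 1 (Vj v i) (t, x))
        - Dx i (Pj p) (t, x) := by
  intro t x i
  have h := hmom t x i
  simp only [Fin.sum_univ_two] at h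
  rw [cVt hv t x i, cV hv t x i 0, cV hv t x i 1, cP hp t x i,
    cS hS t x i 0 0, cS hS t x i 1 1,
    ← Vj_apply v 0 t x, ← Vj_apply v 1 t x] at h
  linear_combination h

lemma hstressJ (hv : ContDiff ℝ (⊤ : ℕ∞) (fun q : Q2 => v q.1 q.2))
    (hS : ∀ i j, ContDiff ℝ (⊤ : ℕ∞) (fun q : Q2 => S q.1 q.2 i j))
    (hstress : ∀ t x i j,
      deriv (fun τ => S τ x i j) t + (∑ k, v t x k * pd (fun y => S t y i j) k x)
        + (∑ k, (S t x i k * Wm v t x k j - Wm v t x i k * S t x k j))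
        - (∑ k, pd (fun y => pd (fun z => deriv (fun τ => S τ z i j) t) k y) k x)
        = Dm v t x i j) :
    ∀ (t : ℝ) (x : E2) (i j : Fin 2),
      Dt (Sj S i j) (t, x) =
        (Dx j (Vj v i) (t, x) + Dx i (Vj v j) (t, x)) / 2
        - (Vj v 0 (t, x) * Dx 0 (Sj S i j) (t, x) + Vj v 1 (t, x) * Dx 1 (Sj S i j) (t, x))
        - ((Sj S i 0 (t, x) * ((Dx j (Vj v 0) (t, x) - Dx 0 (Vj v j) (t, x)) / 2)
            - ((Dx 0 (Vj v i) (t, x) - Dx i (Vj v 0) (t, x)) / 2) * Sj S 0 j (t, x))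
          + (Sj S i 1 (t, x) * ((Dx j (Vj v 1) (t, x) - Dx 1 (Vj v j) (t, x)) / 2)
            - ((Dx 1 (Vj v i) (t, x) - Dx i (Vj v 1) (t, x)) / 2) * Sj S 1 j (t, x)))
        + (Dx 0 (Dx 0 (Dt (Sj S i j))) (t, x) + Dx 1 (Dx 1 (Dt (Sj S i j))) (t, x)) := by
  intro t x i j
  have h := hstress t x i j
  simp only [Fin.sum_univ_two] at h
  rw [cSt hS t x i j, cS hS t x i j 0, cS hS t x i j 1, cS3 hS t x i j 0, cS3 hS t x i j 1,
    cW hv t x 0 j, cW hv t x i 0, cW hv t x 1 j, cW hv t x i 1, cD hv t x i j,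
    ← Vj_apply v 0 t x, ← Vj_apply v 1 t x,
    ← Sj_apply S i 0 t x, ← Sj_apply S 0 j t x, ← Sj_apply S i 1 t x, ← Sj_apply S 1 j t x] at h
  linear_combination h

lemma core (L : Fin 2 → ℝ) (hL : ∀ i, 0 < L i)
    (hv : ContDiff ℝ (⊤ : ℕ∞) (fun q : Q2 => v q.1 q.2))
    (hp : ContDiff ℝ (⊤ : ℕ∞) (fun q : Q2 => p q.1 q.2))
    (hS : ∀ i j, ContDiff ℝ (⊤ : ℕ∞) (fun q : Q2 => S q.1 q.2 i j))
    (hvper : ∀ t (x : E2) (k : Fin 2), v t (x + EuclideanSpace.single k (L k)) = v t x)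
    (hpper : ∀ t (x : E2) (k : Fin 2), p t (x + EuclideanSpace.single k (L k)) = p t x)
    (hSper : ∀ t (x : E2) (k : Fin 2), S t (x + EuclideanSpace.single k (L k)) = S t x)
    (hsym : ∀ t x i j, S t x i j = S t x j i)
    (hdiv : ∀ t x, ∑ k, pd (fun y => v t y k) k x = 0)
    (hmom : ∀ t x i,
      deriv (fun τ => v τ x i) t + (∑ k, v t x k * pd (fun y => v t y i) k x)
        + pd (fun y => p t y) i x = ∑ k, pd (fun y => S t y i k) k x)
    (hstress : ∀ t x i j,
      deriv (fun τ => S τ x i j) t + (∑ k, v t x k * pd (fun y => S t y i j) k x)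
        + (∑ k, (S t x i k * Wm v t x k j - Wm v t x i k * S t x k j))
        - (∑ k, pd (fun y => pd (fun z => deriv (fun τ => S τ z i j) t) k y) k x)
        = Dm v t x i j) :
    ∀ τ : ℝ, ∫ x in box L, Dt (eJ v S) (τ, x) = 0 := by
  intro τ
  have hs10 : Sj S 1 0 = Sj S 0 1 := funext fun q => hsym q.1 q.2 1 0
  have hPhi0c : ContDiff ℝ (⊤ : ℕ∞) (Phi (Vj v 0) (Pj p) (Vj v 0) (Vj v 1) (Sj S 0 0) (Sj S 0 1) (Sj S 0 1) (Sj S 1 1) (Sj S 0 0) (Sj S 0 1) (Dx 0 (Dt (Sj S 0 0))) (Dx 0 (Dt (Sj S 0 1))) (Dx 0 (Dt (Sj S 0 1))) (Dx 0 (Dt (Sj S 1 1)))) := contDiff_Phi (contDiff_Vj hv 0) (contDiff_Pj hp) (contDiff_Vj hv 0) (contDiff_Vj hv 1) (contDiff_Sj hS 0 0) (contDiff_Sj hS 0 1) (contDiff_Sj hS 0 1) (contDiff_Sj hS 1 1) (contDiff_Sj hS 0 0) (contDiff_Sj hS 0 1) (contDiff_Dx (contDiff_Dt (contDiff_Sj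 hS 0 0)) 0) (contDiff_Dx (contDiff_Dt (contDiff_Sj hS 0 1)) 0) (contDiff_Dx (contDiff_Dt (contDiff_Sj hS 0 1)) 0) (contDiff_Dx (contDiff_Dt (contDiff_Sj hS 1 1)) 0)
  have hPhi1c : ContDiff ℝ (⊤ : ℕ∞) (Phi (Vj v 1) (Pj p) (Vj v 0) (Vj v 1) (Sj S 0 0) (Sj S 0 1) (Sj S 0 1) (Sj S 1 1) (Sj S 0 1) (Sj S 1 1) (Dx 1 (Dt (Sj S 0 0))) (Dx 1 (Dt (Sj S 0 1))) (Dx 1 (Dt (Sj S 0 1))) (Dx 1 (Dt (Sj S 1 1)))) := contDiff_Phi (contDiff_Vj hv 1) (contDiff_Pj hp) (contDiff_Vj hv 0) (contDiff_Vj hv 1) (contDiff_Sj hS 0 0) (contDiff_Sj hS 0 1) (contDiff_Sj hS 0 1) (contDiff_Sj hS 1 1) (contDiff_Sj hS 0 1) (contDiff_Sj hS 1 1) (contDiff_Dx (contDiff_Dt (contDiff_Sj hS 0 0)) 1) (contDiff_Dx (contDiff_Dt (contDiff_Sj hS 0 1)) 1) (contDiff_Dx (contDiff_Dt (contDiff_Sj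 hS 0 1)) 1) (contDiff_Dx (contDiff_Dt (contDiff_Sj hS 1 1)) 1)
  have ptw : ∀ x : E2, Dt (eJ v S) (τ, x)
      = Dx 0 (Phi (Vj v 0) (Pj p) (Vj v 0) (Vj v 1) (Sj S 0 0) (Sj S 0 1) (Sj S 0 1) (Sj S 1 1) (Sj S 0 0) (Sj S 0 1) (Dx 0 (Dt (Sj S 0 0))) (Dx 0 (Dt (Sj S 0 1))) (Dx 0 (Dt (Sj S 0 1))) (Dx 0 (Dt (Sj S 1 1)))) (τ, x) + Dx 1 (Phi (Vj v 1) (Pj p) (Vj v 0) (Vj v 1) (Sj S 0 0) (Sj S 0 1) (Sj S 0 1) (Sj S 1 1) (Sj S 0 1) (Sj S 1 1) (Dx 1 (Dt (Sj S 0 0))) (Dx 1 (Dt (Sj S 0 1))) (Dx 1 (Dt (Sj S 0 1))) (Dx 1 (Dt (Sj S 1 1)))) (τ, x) := by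
    intro x
    have hDteJ : Dt (eJ v S) (τ, x) =
      2 * (Vj v 0 (τ, x) * Dt (Vj v 0) (τ, x) + Vj v 1 (τ, x) * Dt (Vj v 1) (τ, x))
      + 2 * (Sj S 0 0 (τ, x) * Dt (Sj S 0 0) (τ, x) + Sj S 0 1 (τ, x) * Dt (Sj S 0 1) (τ, x) + Sj S 1 0 (τ, x) * Dt (Sj S 1 0) (τ, x) + Sj S 1 1 (τ, x) * Dt (Sj S 1 1) (τ, x))
      + 2 * ((Dx 0 (Sj S 0 0)) (τ, x) * Dt (Dx 0 (Sj S 0 0)) (τ, x) + (Dx 1 (Sj S 0 0)) (τ, x) * Dt (Dx 1 (Sj S 0 0)) (τ, x) + (Dx 0 (Sj S 0 1)) (τ, x) * Dt (Dx 0 (Sj S 0 1)) (τ, x) + (Dx 1 (Sj S 0 1)) (τ, x) * Dt (Dx 1 (Sj S 0 1)) (τ, x) + (Dx 0 (Sj S 1 0)) (τ, x) * Dt (Dx 0 (Sj S 1 0)) (τ, x) + (Dx 1 (Sj S 1 0)) (τ, x) * Dt (Dx 1 (Sj S 1 0)) (τ, x) + (Dx 0 (Sj S 1 1)) (τ, x)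 * Dt (Dx 0 (Sj S 1 1)) (τ, x) + (Dx 1 (Sj S 1 1)) (τ, x) * Dt (Dx 1 (Sj S 1 1)) (τ, x)) := deriv_eJ hv hS (τ, x) ((1:ℝ), (0:E2))
    have hdp0 : Dx 0 (Phi (Vj v 0) (Pj p) (Vj v 0) (Vj v 1) (Sj S 0 0) (Sj S 0 1) (Sj S 0 1) (Sj S 1 1) (Sj S 0 0) (Sj S 0 1) (Dx 0 (Dt (Sj S 0 0))) (Dx 0 (Dt (Sj S 0 1))) (Dx 0 (Dt (Sj S 0 1))) (Dx 0 (Dt (Sj S 1 1)))) (τ, x) =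
      (-(2 * (Vj v 0 (τ, x) * Dx 0 (Vj v 0) (τ, x)) + 2 * (Vj v 1 (τ, x) * Dx 0 (Vj v 1) (τ, x))
        + 2 * (Sj S 0 0 (τ, x) * Dx 0 (Sj S 0 0) (τ, x)) + 2 * (Sj S 0 1 (τ, x) * Dx 0 (Sj S 0 1) (τ, x))
        + 2 * (Sj S 0 1 (τ, x) * Dx 0 (Sj S 0 1) (τ, x)) + 2 * (Sj S 1 1 (τ, x) * Dx 0 (Sj S 1 1) (τ, x)))) * Vj v 0 (τ, x)
      + (-((Vj v 0 (τ, x) * Vj v 0 (τ, x) + Vj v 1 (τ, x) * Vj v 1 (τ, x)) + (Sj S 0 0 (τ, x) * Sj S 0 0 (τ, x) + Sj S 0 1 (τ, x) * Sj S 0 1 (τ, x) + Sj S 0 1 (τ, x) * Sj S 0 1 (τ, x) + Sj S 1 1 (τ, x) * Sj S 1 1 (τ, x)))) * Dx 0 (Vj v 0) (τ, x)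
      - 2 * (Dx 0 (Pj p) (τ, x) * Vj v 0 (τ, x) + Pj p (τ, x) * Dx 0 (Vj v 0) (τ, x))
      + 2 * (Dx 0 (Vj v 0) (τ, x) * Sj S 0 0 (τ, x) + Vj v 0 (τ, x) * Dx 0 (Sj S 0 0) (τ, x) + Dx 0 (Vj v 1) (τ, x) * Sj S 0 1 (τ, x) + Vj v 1 (τ, x) * Dx 0 (Sj S 0 1) (τ, x))
      + 2 * (Dx 0 (Sj S 0 0) (τ, x) * Dx 0 (Dt (Sj S 0 0)) (τ, x) + Sj S 0 0 (τ, x) * Dx 0 (Dx 0 (Dt (Sj S 0 0))) (τ, x) + Dx 0 (Sj S 0 1) (τ, x) * Dx 0 (Dt (Sj S 0 1)) (τ, x) + Sj S 0 1 (τ, x) * Dx 0 (Dx 0 (Dt (Sj S 0 1))) (τ, x)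
        + Dx 0 (Sj S 0 1) (τ, x) * Dx 0 (Dt (Sj S 0 1)) (τ, x) + Sj S 0 1 (τ, x) * Dx 0 (Dx 0 (Dt (Sj S 0 1))) (τ, x) + Dx 0 (Sj S 1 1) (τ, x) * Dx 0 (Dt (Sj S 1 1)) (τ, x) + Sj S 1 1 (τ, x) * Dx 0 (Dx 0 (Dt (Sj S 1 1))) (τ, x)) := deriv_Phi (contDiff_Vj hv 0) (contDiff_Pj hp) (contDiff_Vj hv 0) (contDiff_Vj hv 1) (contDiff_Sj hS 0 0) (contDiff_Sj hS 0 1) (contDiff_Sj hS 0 1) (contDiff_Sj hS 1 1) (contDiff_Sj hS 0 0) (contDiff_Sj hS 0 1) (contDiff_Dx (contDiff_Dt (contDiff_Sj hS 0 0)) 0) (contDiff_Dx (contDiff_Dt (contDiff_Sj hS 0 1)) 0) (contDiff_Dx (contDiff_Dt (contDiff_Sj hS 0 1)) 0) (contDiff_Dx (contDiff_Dt (contDiff_Sj hS 1 1)) 0) (τ, x) ((0:ℝ), EuclideanSpace.single (0 : Fin 2) 1)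
    have hdp1 : Dx 1 (Phi (Vj v 1) (Pj p) (Vj v 0) (Vj v 1) (Sj S 0 0) (Sj S 0 1) (Sj S 0 1) (Sj S 1 1) (Sj S 0 1) (Sj S 1 1) (Dx 1 (Dt (Sj S 0 0))) (Dx 1 (Dt (Sj S 0 1))) (Dx 1 (Dt (Sj S 0 1))) (Dx 1 (Dt (Sj S 1 1)))) (τ, x) =
      (-(2 * (Vj v 0 (τ, x) * Dx 1 (Vj v 0) (τ, x)) + 2 * (Vj v 1 (τ, x) * Dx 1 (Vj v 1) (τ, x))
        + 2 * (Sj S 0 0 (τ, x) * Dx 1 (Sj S 0 0) (τ, x)) + 2 * (Sj S 0 1 (τ, x) * Dx 1 (Sj S 0 1) (τ, x))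
        + 2 * (Sj S 0 1 (τ, x) * Dx 1 (Sj S 0 1) (τ, x)) + 2 * (Sj S 1 1 (τ, x) * Dx 1 (Sj S 1 1) (τ, x)))) * Vj v 1 (τ, x)
      + (-((Vj v 0 (τ, x) * Vj v 0 (τ, x) + Vj v 1 (τ, x) * Vj v 1 (τ, x)) + (Sj S 0 0 (τ, x) * Sj S 0 0 (τ, x) + Sj S 0 1 (τ, x) * Sj S 0 1 (τ, x) + Sj S 0 1 (τ, x) * Sj S 0 1 (τ, x) + Sj S 1 1 (τ, x) * Sj S 1 1 (τ, x)))) * Dx 1 (Vj v 1) (τ, x)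
      - 2 * (Dx 1 (Pj p) (τ, x) * Vj v 1 (τ, x) + Pj p (τ, x) * Dx 1 (Vj v 1) (τ, x))
      + 2 * (Dx 1 (Vj v 0) (τ, x) * Sj S 0 1 (τ, x) + Vj v 0 (τ, x) * Dx 1 (Sj S 0 1) (τ, x) + Dx 1 (Vj v 1) (τ, x) * Sj S 1 1 (τ, x) + Vj v 1 (τ, x) * Dx 1 (Sj S 1 1) (τ, x))
      + 2 * (Dx 1 (Sj S 0 0) (τ, x) * Dx 1 (Dt (Sj S 0 0)) (τ, x) + Sj S 0 0 (τ, x) * Dx 1 (Dx 1 (Dt (Sj S 0 0))) (τ, x) + Dx 1 (Sj S 0 1) (τ, x) * Dx 1 (Dt (Sj S 0 1)) (τ, x) + Sj S 0 1 (τ, x) * Dx 1 (Dx 1 (Dt (Sj S 0 1))) (τ, x)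
        + Dx 1 (Sj S 0 1) (τ, x) * Dx 1 (Dt (Sj S 0 1)) (τ, x) + Sj S 0 1 (τ, x) * Dx 1 (Dx 1 (Dt (Sj S 0 1))) (τ, x) + Dx 1 (Sj S 1 1) (τ, x) * Dx 1 (Dt (Sj S 1 1)) (τ, x) + Sj S 1 1 (τ, x) * Dx 1 (Dx 1 (Dt (Sj S 1 1))) (τ, x)) := deriv_Phi (contDiff_Vj hv 1) (contDiff_Pj hp) (contDiff_Vj hv 0) (contDiff_Vj hv 1) (contDiff_Sj hS 0 0) (contDiff_Sj hS 0 1) (contDiff_Sj hS 0 1) (contDiff_Sj hS 1 1) (contDiff_Sj hS 0 1) (contDiff_Sj hS 1 1) (contDiff_Dx (contDiff_Dt (contDiff_Sj hS 0 0)) 1) (contDiff_Dx (contDiff_Dt (contDiff_Sj hS 0 1)) 1) (contDiff_Dx (contDiff_Dt (contDiff_Sj hS 0 1)) 1) (contDiff_Dx (contDiff_Dt (contDiff_Sj hS 1 1)) 1) (τ, x) ((0:ℝ), EuclideanSpace.single (1 : Fin 2) 1)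
    rw [hDteJ, hdp0, hdp1]
    have hm0 := hmomJ hv hp hS hmom τ x 0
    have hm1 := hmomJ hv hp hS hmom τ x 1
    have h00 := hstressJ hv hS hstress τ x 0 0
    have h01 := hstressJ hv hS hstress τ x 0 1
    have h11 := hstressJ hv hS hstress τ x 1 1
    rw [hs10] at hm1 h00 h11 ⊢
    rw [← Dx_Dt_comm (contDiff_Sj hS 0 0) 0 ((τ, x) : Q2),
        ← Dx_Dt_comm (contDiff_Sj hS 0 0) 1 ((τ, x) : Q2),
        ← Dx_Dt_comm (contDiff_Sj hS 0 1) 0 ((τ, x) : Q2),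
        ← Dx_Dt_comm (contDiff_Sj hS 0 1) 1 ((τ, x) : Q2),
        ← Dx_Dt_comm (contDiff_Sj hS 1 1) 0 ((τ, x) : Q2),
        ← Dx_Dt_comm (contDiff_Sj hS 1 1) 1 ((τ, x) : Q2)]
    rw [hm0, hm1, h00, h01, h11]
    linear_combination (Vj v 0 (τ, x) * Vj v 0 (τ, x) + Vj v 1 (τ, x) * Vj v 1 (τ, x)
      + Sj S 0 0 (τ, x) * Sj S 0 0 (τ, x) + 2 * (Sj S 0 1 (τ, x) * Sj S 0 1 (τ, x))
      + Sj S 1 1 (τ, x) * Sj S 1 1 (τ, x) + 2 * Pj p (τ, x)) * hdivJ hv hdiv τ x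
  -- periodicity of the fluxes
  have hVp : ∀ (k' : Fin 2) (i : Fin 2) (q : Q2),
      Vj v i (q + ((0:ℝ), EuclideanSpace.single k' (L k'))) = Vj v i q := by
    intro k' i
    exact shiftJ (fun t x => by show v t (x + _) i = v t x i; rw [hvper])
  have hPp : ∀ (k' : Fin 2) (q : Q2),
      Pj p (q + ((0:ℝ), EuclideanSpace.single k' (L k'))) = Pj p q := by
    intro k'
    exact shiftJ (fun t x => hpper t x k')
  have hSp : ∀ (k' : Fin 2) (i j : Fin 2) (q : Q2),
      Sj S i j (q + ((0:ℝ), EuclideanSpace.single k' (L k'))) = Sj S i j q := by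
    intro k' i j
    exact shiftJ (fun t x => by show S t (x + _) i j = S t x i j; rw [hSper])
  have hGp : ∀ (k' : Fin 2) (k i j : Fin 2) (q : Q2),
      Dx k (Dt (Sj S i j)) (q + ((0:ℝ), EuclideanSpace.single k' (L k'))) = Dx k (Dt (Sj S i j)) q := by
    intro k' k i j
    exact Dx_shift (contDiff_Dt (contDiff_Sj hS i j)) _
      (Dt_shift (contDiff_Sj hS i j) _ (hSp k' i j)) k
  have hint0 : IntegrableOn (fun x : E2 => Dx 0 (Phi (Vj v 0) (Pj p) (Vj v 0) (Vj v 1) (Sj S 0 0) (Sj S 0 1) (Sj S 0 1) (Sj S 1 1) (Sj S 0 0) (Sj S 0 1) (Dx 0 (Dt (Sj S 0 0))) (Dx 0 (Dt (Sj S 0 1))) (Dx 0 (Dt (Sj S 0 1))) (Dx 0 (Dt (Sj S 1 1)))) (τ, x)) (box L) volume :=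
    ((contDiff_Dx hPhi0c 0).continuous.comp
      (continuous_const.prodMk continuous_id)).continuousOn.integrableOn_compact (isCompact_box L)
  have hint1 : IntegrableOn (fun x : E2 => Dx 1 (Phi (Vj v 1) (Pj p) (Vj v 0) (Vj v 1) (Sj S 0 0) (Sj S 0 1) (Sj S 0 1) (Sj S 1 1) (Sj S 0 1) (Sj S 1 1) (Dx 1 (Dt (Sj S 0 0))) (Dx 1 (Dt (Sj S 0 1))) (Dx 1 (Dt (Sj S 0 1))) (Dx 1 (Dt (Sj S 1 1)))) (τ, x)) (box L) volume :=
    ((contDiff_Dx hPhi1c 1).continuous.comp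
      (continuous_const.prodMk continuous_id)).continuousOn.integrableOn_compact (isCompact_box L)
  calc ∫ x in box L, Dt (eJ v S) (τ, x)
      = ∫ x in box L, (Dx 0 (Phi (Vj v 0) (Pj p) (Vj v 0) (Vj v 1) (Sj S 0 0) (Sj S 0 1) (Sj S 0 1) (Sj S 1 1) (Sj S 0 0) (Sj S 0 1) (Dx 0 (Dt (Sj S 0 0))) (Dx 0 (Dt (Sj S 0 1))) (Dx 0 (Dt (Sj S 0 1))) (Dx 0 (Dt (Sj S 1 1)))) (τ, x) + Dx 1 (Phi (Vj v 1) (Pj p) (Vj v 0) (Vj v 1) (Sj S 0 0) (Sj S 0 1) (Sj S 0 1) (Sj S 1 1) (Sj S 0 1) (Sj S 1 1) (Dx 1 (Dt (Sj S 0 0))) (Dx 1 (Dt (Sj S 0 1))) (Dx 1 (Dt (Sj S 0 1))) (Dx 1 (Dt (Sj S 1 1)))) (τ, x)) :=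
        setIntegral_congr_fun (measurableSet_box L) (fun x _ => ptw x)
    _ = (∫ x in box L, Dx 0 (Phi (Vj v 0) (Pj p) (Vj v 0) (Vj v 1) (Sj S 0 0) (Sj S 0 1) (Sj S 0 1) (Sj S 1 1) (Sj S 0 0) (Sj S 0 1) (Dx 0 (Dt (Sj S 0 0))) (Dx 0 (Dt (Sj S 0 1))) (Dx 0 (Dt (Sj S 0 1))) (Dx 0 (Dt (Sj S 1 1)))) (τ, x))
        + ∫ x in box L, Dx 1 (Phi (Vj v 1) (Pj p) (Vj v 0) (Vj v 1) (Sj S 0 0) (Sj S 0 1) (Sj S 0 1) (Sj S 1 1) (Sj S 0 1) (Sj S 1 1) (Dx 1 (Dt (Sj S 0 0))) (Dx 1 (Dt (Sj S 0 1))) (Dx 1 (Dt (Sj S 0 1))) (Dx 1 (Dt (Sj S 1 1)))) (τ, x) := integral_add hint0 hint1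
    _ = 0 := by
        have e0 : (fun x : E2 => Dx 0 (Phi (Vj v 0) (Pj p) (Vj v 0) (Vj v 1) (Sj S 0 0) (Sj S 0 1) (Sj S 0 1) (Sj S 1 1) (Sj S 0 0) (Sj S 0 1) (Dx 0 (Dt (Sj S 0 0))) (Dx 0 (Dt (Sj S 0 1))) (Dx 0 (Dt (Sj S 0 1))) (Dx 0 (Dt (Sj S 1 1)))) (τ, x))
            = fun x => pd (fun y => Phi (Vj v 0) (Pj p) (Vj v 0) (Vj v 1) (Sj S 0 0) (Sj S 0 1) (Sj S 0 1) (Sj S 1 1) (Sj S 0 0) (Sj S 0 1) (Dx 0 (Dt (Sj S 0 0))) (Dx 0 (Dt (Sj S 0 1))) (Dx 0 (Dt (Sj S 0 1))) (Dx 0 (Dt (Sj S 1 1))) (τ, y)) 0 x :=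
          funext fun x => (pd_slice hPhi0c τ x 0).symm
        have e1 : (fun x : E2 => Dx 1 (Phi (Vj v 1) (Pj p) (Vj v 0) (Vj v 1) (Sj S 0 0) (Sj S 0 1) (Sj S 0 1) (Sj S 1 1) (Sj S 0 1) (Sj S 1 1) (Dx 1 (Dt (Sj S 0 0))) (Dx 1 (Dt (Sj S 0 1))) (Dx 1 (Dt (Sj S 0 1))) (Dx 1 (Dt (Sj S 1 1)))) (τ, x))
            = fun x => pd (fun y => Phi (Vj v 1) (Pj p) (Vj v 0) (Vj v 1) (Sj S 0 0) (Sj S 0 1) (Sj S 0 1) (Sj S 1 1) (Sj S 0 1) (Sj S 1 1) (Dx 1 (Dt (Sj S 0 0))) (Dx 1 (Dt (Sj S 0 1))) (Dx 1 (Dt (Sj S 0 1))) (Dx 1 (Dt (Sj S 1 1))) (τ, y)) 1 x :=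
          funext fun x => (pd_slice hPhi1c τ x 1).symm
        rw [e0, e1]
        rw [integral_pd_zero L hL _ (by exact hPhi0c.comp (contDiff_const.prodMk contDiff_id))
          (fun x k' => slice_per (Phi_shift (hVp k' 0) (hPp k') (hVp k' 0) (hVp k' 1) (hSp k' 0 0) (hSp k' 0 1) (hSp k' 0 1) (hSp k' 1 1) (hSp k' 0 0) (hSp k' 0 1) (hGp k' 0 0 0) (hGp k' 0 0 1) (hGp k' 0 0 1) (hGp k' 0 1 1)) τ x) 0]
        rw [integral_pd_zero L hL _ (by exact hPhi1c.comp (contDiff_const.prodMk contDiff_id))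
          (fun x k' => slice_per (Phi_shift (hVp k' 1) (hPp k') (hVp k' 0) (hVp k' 1) (hSp k' 0 0) (hSp k' 0 1) (hSp k' 0 1) (hSp k' 1 1) (hSp k' 0 1) (hSp k' 1 1) (hGp k' 1 0 0) (hGp k' 1 0 1) (hGp k' 1 0 1) (hGp k' 1 1 1)) τ x) 1]
        norm_num

end Main

/-- Energy identity for the `∂ₜΔ`-regularized system: for a smooth Ω-periodic solution of
`div v = 0`, `∂ₜv + (v·∇)v + ∇p = div S`, `∂ₜS + (v·∇)S + SW − WS − Δ∂ₜS = D`,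
`‖v(t)‖² + ‖S(t)‖² + ‖∇S(t)‖² = ‖v(0)‖² + ‖S(0)‖² + ‖∇S(0)‖²` for all `t ∈ [0,T]`. -/
theorem energy_identity_dtDelta_regularized
    (L : Fin 2 → ℝ) (hL : ∀ i, 0 < L i) (T : ℝ) (hT : 0 < T)
    (v : ℝ → EuclideanSpace ℝ (Fin 2) → EuclideanSpace ℝ (Fin 2))
    (p : ℝ → EuclideanSpace ℝ (Fin 2) → ℝ)
    (S : ℝ → EuclideanSpace ℝ (Fin 2) → Fin 2 → Fin 2 → ℝ)
    (hv : ContDiff ℝ (⊤ : ℕ∞) (fun q : ℝ × EuclideanSpace ℝ (Fin 2) => v q.1 q.2))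
    (hp : ContDiff ℝ (⊤ : ℕ∞) (fun q : ℝ × EuclideanSpace ℝ (Fin 2) => p q.1 q.2))
    (hS : ∀ i j, ContDiff ℝ (⊤ : ℕ∞) (fun q : ℝ × EuclideanSpace ℝ (Fin 2) => S q.1 q.2 i j))
    (hvper : ∀ t (x : EuclideanSpace ℝ (Fin 2)) (k : Fin 2),
      v t (x + EuclideanSpace.single k (L k)) = v t x)
    (hpper : ∀ t (x : EuclideanSpace ℝ (Fin 2)) (k : Fin 2),
      p t (x + EuclideanSpace.single k (L k)) = p t x)
    (hSper : ∀ t (x : EuclideanSpace ℝ (Fin 2)) (k : Fin 2),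
      S t (x + EuclideanSpace.single k (L k)) = S t x)
    (hsym : ∀ t x i j, S t x i j = S t x j i)
    (hdiv : ∀ t x, ∑ k, pd (fun y => v t y k) k x = 0)
    (hmom : ∀ t x i,
      deriv (fun τ => v τ x i) t + (∑ k, v t x k * pd (fun y => v t y i) k x)
        + pd (fun y => p t y) i x = ∑ k, pd (fun y => S t y i k) k x)
    (hstress : ∀ t x i j,
      deriv (fun τ => S τ x i j) t + (∑ k, v t x k * pd (fun y => S t y i j) k x)
        + (∑ k, (S t x i k * Wm v t x k j - Wm v t x i k * S t x k j))
        - (∑ k, pd (fun y => pd (fun z => deriv (fun τ => S τ z i j) t) k y) k x)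
        = Dm v t x i j) :
    ∀ t ∈ Icc 0 T,
      (∫ x in box L, ((∑ i, (v t x i) ^ 2) + (∑ i, ∑ j, (S t x i j) ^ 2)
          + ∑ i, ∑ j, ∑ k, (pd (fun y => S t y i j) k x) ^ 2)) =
        ∫ x in box L, ((∑ i, (v 0 x i) ^ 2) + (∑ i, ∑ j, (S 0 x i j) ^ 2)
          + ∑ i, ∑ j, ∑ k, (pd (fun y => S 0 y i j) k x) ^ 2) := by

  intro t ht
  have heJc : ContDiff ℝ (⊤ : ℕ∞) (eJ v S) := contDiff_eJ hv hS
  have E_t : ∫ x in box L, ((∑ i, (v t x i) ^ 2) + (∑ i, ∑ j, (S t x i j) ^ 2)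
      + ∑ i, ∑ j, ∑ k, (pd (fun y => S t y i j) k x) ^ 2) = ∫ x in box L, eJ v S (t, x) :=
    setIntegral_congr_fun (measurableSet_box L) (fun x _ => integrand_eq hS t x)
  have E_0 : ∫ x in box L, ((∑ i, (v 0 x i) ^ 2) + (∑ i, ∑ j, (S 0 x i j) ^ 2)
      + ∑ i, ∑ j, ∑ k, (pd (fun y => S 0 y i j) k x) ^ 2) = ∫ x in box L, eJ v S (0, x) :=
    setIntegral_congr_fun (measurableSet_box L) (fun x _ => integrand_eq hS 0 x)
  rw [E_t, E_0]
  have hi : ∀ s : ℝ, IntegrableOn (fun x => eJ v S (s, x)) (box L) volume := fun s =>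
    ((heJc.continuous.comp (continuous_const.prodMk continuous_id)).continuousOn.integrableOn_compact
      (isCompact_box L))
  have hFTC : ∀ x : E2, eJ v S (t, x) - eJ v S (0, x)
      = ∫ τ in (0:ℝ)..t, Dt (eJ v S) (τ, x) := fun x =>
    (intervalIntegral.integral_eq_sub_of_hasDerivAt
      (fun τ _ => hasDerivAt_slice heJc τ x)
      (((contDiff_Dt heJc).continuous.comp
        (continuous_id.prodMk continuous_const)).intervalIntegrable 0 t)).symm
  have hzero : ∫ x in box L, (eJ v S (t, x) - eJ v S (0, x)) = 0 := by
    rw [setIntegral_congr_fun (measurableSet_box L) (fun x _ => hFTC x)]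
    simp only [intervalIntegral.integral_of_le ht.1]
    have hint : Integrable (Function.uncurry fun (x : E2) (τ : ℝ) => Dt (eJ v S) (τ, x))
        ((volume.restrict (box L)).prod (volume.restrict (Ioc 0 t))) := by
      rw [Measure.prod_restrict]
      apply IntegrableOn.mono_set (t := (box L) ×ˢ (Icc 0 t))
      · apply ContinuousOn.integrableOn_compact ((isCompact_box L).prod isCompact_Icc)
        exact ((contDiff_Dt heJc).continuous.comp
          (continuous_snd.prodMk continuous_fst)).continuousOn
      · exact Set.prod_mono subset_rfl Ioc_subset_Icc_self
    rw [MeasureTheory.integral_integral_swap hint]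
    rw [setIntegral_congr_fun measurableSet_Ioc
      (fun τ _ => core L hL hv hp hS hvper hpper hSper hsym hdiv hmom hstress τ)]
    simp
  rw [integral_sub (hi t) (hi 0)] at hzero
  linarith
end
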